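/- arXiv:2411.00022 — 15 statements merged into one kernel-verified Lean document; each statement's English description precedes it below -/
import Mathlib

section
/- Let A be an n×n complex matrix with k = Ind(A) ≥ 1 and let m be a positive integer. Set A₁ = A A^{w_m} A and A₂ = A − A₁. Then A₁ satisfies rank(A₁) = rank(A₁²), A₂ satisfies A₂^k = 0, A₂ A₁ = 0, and (A^k)^* A^m A₂ = 0. (Existence of the m-core-nilpotent decomposition, with explicit core and nilpotent parts.) -/
open Matrix

/-- `X` is the Moore–Penrose inverse of `A`. -/
def IsMoorePenrose {p q : ℕ} (A : Matrix (Fin p) (Fin q) ℂ)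
    (X : Matrix (Fin q) (Fin p) ℂ) : Prop :=
  A * X * A = A ∧ X * A * X = X ∧ (A * X)ᴴ = A * X ∧ (X * A)ᴴ = X * A

/-- `k` is the index of `A`: the smallest nonnegative integer `j` with
`rank (A ^ (j+1)) = rank (A ^ j)`. -/
def HasIndex {n : ℕ} (A : Matrix (Fin n) (Fin n) ℂ) (k : ℕ) : Prop :=
  (A ^ (k + 1)).rank = (A ^ k).rank ∧ ∀ j < k, (A ^ (j + 1)).rank ≠ (A ^ j).rank

/-- `X` is the core-EP inverse of `A` (with `k = Ind A`). -/
def IsCoreEP {n : ℕ} (A : Matrix (Fin n) (Fin n) ℂ) (k : ℕ)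
    (X : Matrix (Fin n) (Fin n) ℂ) : Prop :=
  X * A ^ (k + 1) = A ^ k ∧ A * X ^ 2 = X ∧ (A * X)ᴴ = A * X

/-- `X` is the Drazin inverse of `A` (with `k = Ind A`). -/
def IsDrazin {n : ℕ} (A : Matrix (Fin n) (Fin n) ℂ) (k : ℕ)
    (X : Matrix (Fin n) (Fin n) ℂ) : Prop :=
  X * A * X = X ∧ A * X = X * A ∧ X * A ^ (k + 1) = A ^ k


namespace MCoreAux

variable {n : ℕ} (A X : Matrix (Fin n) (Fin n) ℂ)

lemma pcon {a b : ℕ} (h : a = b) : A ^ a = A ^ b := by rw [h]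

lemma aux_a (h2 : A * X ^ 2 = X) (j : ℕ) : A * X ^ (j + 1 + 1) = X ^ (j + 1) := by
  calc A * X ^ (j + 1 + 1) = A * (X ^ 2 * X ^ j) := by
        rw [← pow_add, pcon X (show 2 + j = j + 1 + 1 by omega)]
    _ = A * X ^ 2 * X ^ j := by rw [mul_assoc]
    _ = X * X ^ j := by rw [h2]
    _ = X ^ (j + 1) := by rw [← pow_succ']

lemma aux_b (h2 : A * X ^ 2 = X) : ∀ j, A ^ j * X ^ (j + 1) = X := by
  intro j
  induction j with
  | zero => simp
  | succ j ih => rw [pow_succ, mul_assoc, aux_a A X h2 j, ih]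

lemma aux_c (h2 : A * X ^ 2 = X) (j : ℕ) : A ^ (j + 1) * X ^ (j + 1) = A * X := by
  rw [pow_succ', mul_assoc, aux_b A X h2 j]

variable {k : ℕ}

lemma aux_d (h1 : X * A ^ (k + 1) = A ^ k) :
    ∀ t, X * A ^ (k + 1 + t) = A ^ (k + t) := by
  intro t
  induction t with
  | zero => simpa using h1
  | succ t ih =>
      rw [pcon A (show k + 1 + (t + 1) = (k + 1 + t) + 1 by omega), pow_succ,
        ← mul_assoc, ih, ← pow_succ, pcon A (show k + t + 1 = k + (t+1) by omega)]

lemma aux_e (h1 : X * A ^ (k + 1) = A ^ k) :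
    ∀ s t, X ^ s * A ^ (s + (k + t)) = A ^ (k + t) := by
  intro s t
  induction s with
  | zero => simp
  | succ s ih =>
      rw [pow_succ, mul_assoc, pcon A (show s + 1 + (k + t) = k + 1 + (s + t) by omega),
        aux_d A X h1 (s + t), pcon A (show k + (s + t) = s + (k + t) by omega), ih]

lemma aux_f (h1 : X * A ^ (k + 1) = A ^ k) (h2 : A * X ^ 2 = X) : X * A * X = X := by
  have hb := aux_b A X h2 k
  calc X * A * X = X * (A * (A ^ k * X ^ (k + 1))) := by rw [hb, mul_assoc]
    _ = X * (A ^ (k + 1) * X ^ (k + 1)) := by rw [← mul_assoc A, ← pow_succ']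
    _ = X * A ^ (k + 1) * X ^ (k + 1) := by rw [mul_assoc]
    _ = A ^ k * X ^ (k + 1) := by rw [h1]
    _ = X := hb

lemma aux_g (h1 : X * A ^ (k + 1) = A ^ k) (h2 : A * X ^ 2 = X) :
    X * A * (A * X) = A * X := by
  have hc := aux_c A X h2 k
  calc X * A * (A * X) = X * A * (A ^ (k + 1) * X ^ (k + 1)) := by rw [hc]
    _ = X * (A * A ^ (k + 1)) * X ^ (k + 1) := by simp only [mul_assoc]
    _ = X * A ^ (k + 1 + 1) * X ^ (k + 1) := by rw [← pow_succ']
    _ = A ^ (k + 1) * X ^ (k + 1) := by rw [aux_d A X h1 1]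
    _ = A * X := hc

lemma aux_L (h1 : X * A ^ (k + 1) = A ^ k) (h2 : A * X ^ 2 = X) :
    ∀ j, X ^ (j + 1) * A * (A * X) = A * X ^ (j + 1) := by
  intro j
  match j with
  | 0 => simpa using aux_g A X h1 h2
  | s + 1 =>
    calc X ^ (s + 1 + 1) * A * (A * X) = X ^ (s + 1) * (X * A * (A * X)) := by
          rw [pow_succ]; simp only [mul_assoc]
      _ = X ^ (s + 1) * (A * X) := by rw [aux_g A X h1 h2]
      _ = X ^ s * (X * A * X) := by rw [pow_succ]; simp only [mul_assoc]
      _ = X ^ s * X := by rw [aux_f A X h1 h2]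
      _ = X ^ (s + 1) := by rw [← pow_succ]
      _ = A * X ^ (s + 1 + 1) := (aux_a A X h2 s).symm

end MCoreAux

/-- Existence of the `m`-core-nilpotent decomposition, with explicit core and
nilpotent parts. -/
theorem m_core_nilpotent_decomposition_existence {n k m : ℕ}
    (A AEP : Matrix (Fin n) (Fin n) ℂ)
    (hk : HasIndex A k) (hk1 : 1 ≤ k) (hm : 0 < m)
    (hEP : IsCoreEP A k AEP) :
    (A * (AEP ^ (m + 1) * A ^ m) * A).rank
        = ((A * (AEP ^ (m + 1) * A ^ m) * A) ^ 2).rank ∧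
    (A - A * (AEP ^ (m + 1) * A ^ m) * A) ^ k = 0 ∧
    (A - A * (AEP ^ (m + 1) * A ^ m) * A) * (A * (AEP ^ (m + 1) * A ^ m) * A) = 0 ∧
    (A ^ k)ᴴ * A ^ m * (A - A * (AEP ^ (m + 1) * A ^ m) * A) = 0 := by
  open MCoreAux in
  obtain ⟨κ, rfl⟩ : ∃ κ, k = κ + 1 := ⟨k - 1, by omega⟩
  obtain ⟨μ, rfl⟩ : ∃ μ, m = μ + 1 := ⟨m - 1, by omega⟩
  obtain ⟨hrank, -⟩ := hk
  obtain ⟨h1, h2, h3⟩ := hEP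
  set X := AEP with hXdef
  -- simplify A₁
  have hA1 : A * (X ^ (μ + 1 + 1) * A ^ (μ + 1)) * A = X ^ (μ + 1) * A ^ (μ + 1 + 1) := by
    calc A * (X ^ (μ + 1 + 1) * A ^ (μ + 1)) * A
        = (A * X ^ (μ + 1 + 1)) * (A ^ (μ + 1) * A) := by simp only [mul_assoc]
      _ = X ^ (μ + 1) * A ^ (μ + 1 + 1) := by rw [aux_a A X h2 μ, ← pow_succ]
  rw [hA1]
  -- key identity
  have hK : X ^ (μ + 1) * A ^ (μ + 1 + 1) * X ^ (μ + 1) = A * X ^ (μ + 1) := by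
    calc X ^ (μ + 1) * A ^ (μ + 1 + 1) * X ^ (μ + 1)
        = X ^ (μ + 1) * A * (A ^ (μ + 1) * X ^ (μ + 1)) := by
          rw [pow_succ' A (μ + 1)]; simp only [mul_assoc]
      _ = X ^ (μ + 1) * A * (A * X) := by rw [aux_c A X h2 μ]
      _ = A * X ^ (μ + 1) := aux_L A X h1 h2 μ
  -- part (iii)
  have part3 : (A - X ^ (μ + 1) * A ^ (μ + 1 + 1)) * (X ^ (μ + 1) * A ^ (μ + 1 + 1)) = 0 := by
    have h4 : (X ^ (μ + 1) * A ^ (μ + 1 + 1)) * (X ^ (μ + 1) * A ^ (μ + 1 + 1))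
        = A * (X ^ (μ + 1) * A ^ (μ + 1 + 1)) := by
      calc (X ^ (μ + 1) * A ^ (μ + 1 + 1)) * (X ^ (μ + 1) * A ^ (μ + 1 + 1))
          = (X ^ (μ + 1) * A ^ (μ + 1 + 1) * X ^ (μ + 1)) * A ^ (μ + 1 + 1) := by
            simp only [mul_assoc]
        _ = A * (X ^ (μ + 1) * A ^ (μ + 1 + 1)) := by rw [hK]; simp only [mul_assoc]
    rw [sub_mul, h4, sub_self]
  -- part (ii): closed form for powers
  have hpow : ∀ j, (A - X ^ (μ + 1) * A ^ (μ + 1 + 1)) ^ (j + 1)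
      = A ^ (j + 1) - X ^ (μ + 1) * A ^ (μ + 1 + (j + 1)) := by
    intro j
    induction j with
    | zero => simp
    | succ j ih =>
        have hT4 : (X ^ (μ + 1) * A ^ (μ + 1 + 1)) * (X ^ (μ + 1) * A ^ (μ + 1 + (j + 1)))
            = A * (X ^ (μ + 1) * A ^ (μ + 1 + (j + 1))) := by
          calc (X ^ (μ + 1) * A ^ (μ + 1 + 1)) * (X ^ (μ + 1) * A ^ (μ + 1 + (j + 1)))
              = (X ^ (μ + 1) * A ^ (μ + 1 + 1) * X ^ (μ + 1)) * A ^ (μ + 1 + (j + 1)) := by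
                simp only [mul_assoc]
            _ = A * (X ^ (μ + 1) * A ^ (μ + 1 + (j + 1))) := by rw [hK]; simp only [mul_assoc]
        have hT3 : (X ^ (μ + 1) * A ^ (μ + 1 + 1)) * A ^ (j + 1)
            = X ^ (μ + 1) * A ^ (μ + 1 + (j + 1 + 1)) := by
          rw [mul_assoc, ← pow_add, pcon A (show μ + 1 + 1 + (j + 1) = μ + 1 + (j + 1 + 1) by omega)]
        rw [pow_succ', ih, mul_sub, sub_mul, sub_mul, hT3, hT4, ← pow_succ']
        abel
  have part2 : (A - X ^ (μ + 1) * A ^ (μ + 1 + 1)) ^ (κ + 1) = 0 := by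
    rw [hpow κ, pcon A (show μ + 1 + (κ + 1) = (μ + 1) + (κ + 1 + 0) by omega),
      aux_e A X h1 (μ + 1) 0, pcon A (show κ + 1 + 0 = κ + 1 by omega), sub_self]
  -- part (iv)
  have hPA : (A * X) * A ^ (κ + 1) = A ^ (κ + 1) := by
    calc (A * X) * A ^ (κ + 1) = A * X * (X * A ^ (κ + 1 + 1)) := by rw [h1]
      _ = A * X ^ 2 * A ^ (κ + 1 + 1) := by rw [pow_two]; simp only [mul_assoc]
      _ = X * A ^ (κ + 1 + 1) := by rw [h2]
      _ = A ^ (κ + 1) := h1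
  have hHerm : (A ^ (κ + 1))ᴴ * (A * X) = (A ^ (κ + 1))ᴴ := by
    have h := congrArg conjTranspose hPA
    rwa [conjTranspose_mul, h3] at h
  have hmid : A ^ (μ + 1) * (A - X ^ (μ + 1) * A ^ (μ + 1 + 1))
      = A ^ (μ + 1 + 1) - (A * X) * A ^ (μ + 1 + 1) := by
    rw [mul_sub, ← pow_succ]
    congr 1
    rw [← mul_assoc, aux_c A X h2 μ]
  have part4 : (A ^ (κ + 1))ᴴ * A ^ (μ + 1) * (A - X ^ (μ + 1) * A ^ (μ + 1 + 1)) = 0 := by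
    calc (A ^ (κ + 1))ᴴ * A ^ (μ + 1) * (A - X ^ (μ + 1) * A ^ (μ + 1 + 1))
        = (A ^ (κ + 1))ᴴ * (A ^ (μ + 1 + 1) - (A * X) * A ^ (μ + 1 + 1)) := by
          rw [mul_assoc, hmid]
      _ = (A ^ (κ + 1))ᴴ * A ^ (μ + 1 + 1) - ((A ^ (κ + 1))ᴴ * (A * X)) * A ^ (μ + 1 + 1) := by
          rw [mul_sub]; simp only [mul_assoc]
      _ = 0 := by rw [hHerm, sub_self]
  -- part (i): ranks
  have hXm : A ^ (κ + 1) * X ^ (κ + 1 + 1 + μ) = X ^ (μ + 1) := by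
    have h := congrArg (fun M => M * X ^ μ) (aux_b A X h2 (κ + 1))
    rw [mul_assoc, ← pow_add] at h
    rwa [← pow_succ'] at h
  have hr1 : (X ^ (μ + 1) * A ^ (μ + 1 + 1)) * A ^ κ = A ^ (κ + 1) := by
    rw [mul_assoc, ← pow_add,
      pcon A (show μ + 1 + 1 + κ = (μ + 1) + (κ + 1 + 0) by omega),
      aux_e A X h1 (μ + 1) 0, pcon A (show κ + 1 + 0 = κ + 1 by omega)]
  have hr2 : ((X ^ (μ + 1) * A ^ (μ + 1 + 1)) * (X ^ (μ + 1) * A ^ (μ + 1 + 1))) * A ^ κ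
      = A ^ (κ + 1 + 1) := by
    calc ((X ^ (μ + 1) * A ^ (μ + 1 + 1)) * (X ^ (μ + 1) * A ^ (μ + 1 + 1))) * A ^ κ
        = (X ^ (μ + 1) * A ^ (μ + 1 + 1)) * ((X ^ (μ + 1) * A ^ (μ + 1 + 1)) * A ^ κ) :=
          mul_assoc _ _ _
      _ = (X ^ (μ + 1) * A ^ (μ + 1 + 1)) * A ^ (κ + 1) := by rw [hr1]
      _ = X ^ (μ + 1) * A ^ ((μ + 1) + (κ + 1 + 1)) := by
          rw [mul_assoc, ← pow_add, pcon A (show μ + 1 + 1 + (κ + 1) = (μ + 1) + (κ + 1 + 1) by omega)]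
      _ = A ^ (κ + 1 + 1) := aux_e A X h1 (μ + 1) 1
  have hle1 : (X ^ (μ + 1) * A ^ (μ + 1 + 1)).rank ≤ (A ^ (κ + 1)).rank := by
    have : X ^ (μ + 1) * A ^ (μ + 1 + 1)
        = A ^ (κ + 1) * (X ^ (κ + 1 + 1 + μ) * A ^ (μ + 1 + 1)) := by
      rw [← mul_assoc, hXm]
    rw [this]
    exact rank_mul_le_left _ _
  have hle2 : (A ^ (κ + 1 + 1)).rank
      ≤ ((X ^ (μ + 1) * A ^ (μ + 1 + 1)) * (X ^ (μ + 1) * A ^ (μ + 1 + 1))).rank := by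
    rw [← hr2]; exact rank_mul_le_left _ _
  have hle3 : ((X ^ (μ + 1) * A ^ (μ + 1 + 1)) * (X ^ (μ + 1) * A ^ (μ + 1 + 1))).rank
      ≤ (X ^ (μ + 1) * A ^ (μ + 1 + 1)).rank := rank_mul_le_left _ _
  have part1 : (X ^ (μ + 1) * A ^ (μ + 1 + 1)).rank
      = ((X ^ (μ + 1) * A ^ (μ + 1 + 1)) ^ 2).rank := by
    rw [pow_two]
    omega
  exact ⟨part1, part2, part3, part4⟩
end

section
/- Let A be an n×n complex matrix with k = Ind(A) ≥ 1 and let m be a positive integer. Suppose A = B₁ + B₂ where B₁, B₂ are n×n complex matrices with rank(B₁) = rank(B₁²), B₂^k = 0, B₂ B₁ = 0, and (A^k)^* A^m B₂ = 0. Then B₁ = A A^{w_m} A and B₂ = A − A A^{w_m} A. (Uniqueness of the m-core-nilpotent decomposition.) -/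
open Matrix

/-- If the range (column space) of `M` is contained in that of `N`, then `M = N * C`. -/
lemma exists_mul_eq_of_range_le {n : ℕ} {M N : Matrix (Fin n) (Fin n) ℂ}
    (h : LinearMap.range M.mulVecLin ≤ LinearMap.range N.mulVecLin) :
    ∃ C : Matrix (Fin n) (Fin n) ℂ, M = N * C := by
  have hmem : ∀ j : Fin n, M.mulVec (Pi.single j 1) ∈ LinearMap.range N.mulVecLin :=
    fun j => h (LinearMap.mem_range_self _ (Pi.single j 1))
  choose c hc using hmem
  refine ⟨Matrix.of fun i j => c j i, ?_⟩
  ext i j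
  have h0 := congrFun (hc j) i
  simp only [Matrix.mulVecLin_apply, Matrix.mulVec_single, mul_one] at h0
  simpa [Matrix.mul_apply, Matrix.mulVec, dotProduct] using h0.symm

/-- If `rank M = rank (N * M')` where moreover range (N) ≤ range (M) ... specialized:
ranges with equal rank and containment give factorization the other way. -/
lemma exists_factor {n : ℕ} {M N : Matrix (Fin n) (Fin n) ℂ}
    (hle : LinearMap.range N.mulVecLin ≤ LinearMap.range M.mulVecLin)
    (hrank : M.rank = N.rank) :
    ∃ C : Matrix (Fin n) (Fin n) ℂ, M = N * C := by
  apply exists_mul_eq_of_range_le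
  have : LinearMap.range N.mulVecLin = LinearMap.range M.mulVecLin :=
    Submodule.eq_of_le_of_finrank_le hle (le_of_eq hrank)
  exact this.ge

lemma range_mul_le {n : ℕ} (M N : Matrix (Fin n) (Fin n) ℂ) :
    LinearMap.range (M * N).mulVecLin ≤ LinearMap.range M.mulVecLin := by
  rw [Matrix.mulVecLin_mul]
  exact LinearMap.range_comp_le_range _ _

/-- Uniqueness of the `m`-core-nilpotent decomposition. -/
theorem m_core_nilpotent_decomposition_uniqueness {n k m : ℕ}
    (A AEP B₁ B₂ : Matrix (Fin n) (Fin n) ℂ)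
    (hk : HasIndex A k) (hk1 : 1 ≤ k) (hm : 0 < m)
    (hEP : IsCoreEP A k AEP)
    (hsum : A = B₁ + B₂)
    (h1 : B₁.rank = (B₁ ^ 2).rank)
    (h2 : B₂ ^ k = 0)
    (h3 : B₂ * B₁ = 0)
    (h4 : (A ^ k)ᴴ * A ^ m * B₂ = 0) :
    B₁ = A * (AEP ^ (m + 1) * A ^ m) * A ∧
    B₂ = A - A * (AEP ^ (m + 1) * A ^ m) * A := by
  set X := AEP with hX
  obtain ⟨hE1, hE2, hE3⟩ := hEP
  -- A^j * B₁ = B₁ ^ (j+1)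
  have L_AB : ∀ j, A ^ j * B₁ = B₁ ^ (j + 1) := by
    intro j
    induction j with
    | zero => simp
    | succ j ih =>
        have : A ^ (j + 1) * B₁ = A * (A ^ j * B₁) := by
          rw [pow_succ', mul_assoc]
        rw [this, ih, hsum, add_mul]
        have hB2 : B₂ * B₁ ^ (j + 1) = 0 := by
          rw [pow_succ', ← mul_assoc, h3, zero_mul]
        rw [hB2, add_zero, ← pow_succ']
  -- F1 : X = A^j * X^(j+1)
  have F1 : ∀ j, X = A ^ j * X ^ (j + 1) := by
    intro j
    induction j with
    | zero => simp
    | succ j ih =>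
        calc X = A ^ j * X ^ (j + 1) := ih
        _ = A ^ j * (X * X ^ j) := by rw [pow_succ']
        _ = A ^ j * ((A * X ^ 2) * X ^ j) := by rw [hE2]
        _ = A ^ (j + 1) * X ^ (j + 2) := by
            rw [pow_succ,
              show X ^ (j + 2) = X ^ 2 * X ^ j from by
                rw [show j + 2 = 2 + j from Nat.add_comm j 2, pow_add]]
            noncomm_ring
  -- F6 : X^j * A^(k+j) = A^k
  have F6 : ∀ j, X ^ j * A ^ (k + j) = A ^ k := by
    intro j
    induction j with
    | zero => simp
    | succ j ih =>
        calc X ^ (j + 1) * A ^ (k + (j + 1))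
            = X ^ j * (X * A ^ (k + 1)) * A ^ j := by
              have h : A ^ (k + (j + 1)) = A ^ (k + 1) * A ^ j := by
                rw [← pow_add]; ring_nf
              rw [pow_succ, h]
              noncomm_ring
        _ = X ^ j * A ^ k * A ^ j := by rw [hE1]
        _ = X ^ j * A ^ (k + j) := by rw [mul_assoc, ← pow_add]
        _ = A ^ k := ih
  -- F5 : X * A * X = X
  have F5 : X * A * X = X := by
    calc X * A * X = X * A * (A ^ k * X ^ (k + 1)) := by rw [← F1 k]
    _ = (X * A ^ (k + 1)) * X ^ (k + 1) := by
        rw [mul_assoc, mul_assoc, ← mul_assoc A, ← pow_succ']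
    _ = A ^ k * X ^ (k + 1) := by rw [hE1]
    _ = X := (F1 k).symm
  -- A^k = A^(k+1) * C'
  obtain ⟨C', hC'⟩ : ∃ C', A ^ k = A ^ (k + 1) * C' := by
    apply exists_factor
    · have : A ^ (k + 1) = A ^ k * A := pow_succ A k
      rw [this]
      exact range_mul_le _ _
    · exact hk.1.symm
  -- A * X * A^k = A^k
  have hPAk : A * X * A ^ k = A ^ k := by
    calc A * X * A ^ k = A * X * (A ^ (k + 1) * C') := by rw [← hC']
    _ = A * (X * A ^ (k + 1)) * C' := by noncomm_ring
    _ = A * A ^ k * C' := by rw [hE1]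
    _ = A ^ (k + 1) * C' := by rw [← pow_succ']
    _ = A ^ k := hC'.symm
  -- A * X = A^k * (A * X^(k+1))
  have hPfac : A * X = A ^ k * (A * X ^ (k + 1)) := by
    calc A * X = A * (A ^ k * X ^ (k + 1)) := by rw [← F1 k]
    _ = (A * A ^ k) * X ^ (k + 1) := by rw [mul_assoc]
    _ = (A ^ k * A) * X ^ (k + 1) := by rw [← pow_succ', pow_succ]
    _ = A ^ k * (A * X ^ (k + 1)) := by rw [mul_assoc]
  -- A * X * (A^m * B₂) = 0
  have hkill : A * X * (A ^ m * B₂) = 0 := by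
    have hfacH : A * X = (A * X ^ (k + 1))ᴴ * (A ^ k)ᴴ := by
      rw [← Matrix.conjTranspose_mul, ← hPfac, hE3]
    calc A * X * (A ^ m * B₂)
        = (A * X ^ (k + 1))ᴴ * ((A ^ k)ᴴ * A ^ m * B₂) := by
          rw [hfacH]; noncomm_ring
    _ = 0 := by rw [h4, mul_zero]
  -- X * (A^m * B₂) = 0
  have hkill2 : X * (A ^ m * B₂) = 0 := by
    calc X * (A ^ m * B₂) = (X * A * X) * (A ^ m * B₂) := by rw [F5]
    _ = X * (A * X * (A ^ m * B₂)) := by noncomm_ring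
    _ = 0 := by rw [hkill, mul_zero]
  -- B₁ = B₁^(r+1) * C^r
  obtain ⟨C, hC⟩ : ∃ C, B₁ = B₁ ^ 2 * C := by
    apply exists_factor
    · have : B₁ ^ 2 = B₁ * B₁ := sq B₁
      rw [this]
      have := range_mul_le B₁ B₁
      exact this
    · exact h1
  have hCpow : ∀ r, B₁ = B₁ ^ (r + 1) * C ^ r := by
    intro r
    induction r with
    | zero => simp
    | succ r ih =>
        have hstep : B₁ ^ (r + 1) = B₁ ^ (r + 2) * C := by
          calc B₁ ^ (r + 1) = B₁ ^ r * B₁ := pow_succ B₁ r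
          _ = B₁ ^ r * (B₁ ^ 2 * C) := by rw [← hC]
          _ = B₁ ^ (r + 2) * C := by rw [← mul_assoc, ← pow_add]
        calc B₁ = B₁ ^ (r + 1) * C ^ r := ih
        _ = B₁ ^ (r + 2) * C * C ^ r := by rw [hstep]
        _ = B₁ ^ (r + 2) * C ^ (r + 1) := by rw [mul_assoc, ← pow_succ']
  -- main computation : T = B₁
  have hT : A * (X ^ (m + 1) * A ^ m) * A = B₁ := by
    have hAm1 : A ^ m * A = B₁ ^ (m + 1) + A ^ m * B₂ := by
      calc A ^ m * A = A ^ m * (B₁ + B₂) := by rw [← hsum]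
      _ = A ^ m * B₁ + A ^ m * B₂ := by rw [mul_add]
      _ = B₁ ^ (m + 1) + A ^ m * B₂ := by rw [L_AB m]
    have hXkill : X ^ (m + 1) * (A ^ m * B₂) = 0 := by
      calc X ^ (m + 1) * (A ^ m * B₂) = X ^ m * (X * (A ^ m * B₂)) := by
            rw [pow_succ, mul_assoc]
      _ = 0 := by rw [hkill2, mul_zero]
    have hB1m : B₁ ^ (m + 1) = A ^ (k + m) * B₁ * C ^ k := by
      calc B₁ ^ (m + 1) = B₁ ^ m * B₁ := pow_succ B₁ m
      _ = B₁ ^ m * (B₁ ^ (k + 1) * C ^ k) := by rw [← hCpow k]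
      _ = B₁ ^ (k + m + 1) * C ^ k := by
          rw [← mul_assoc, ← pow_add]
          ring_nf
      _ = A ^ (k + m) * B₁ * C ^ k := by rw [L_AB (k + m)]
    calc A * (X ^ (m + 1) * A ^ m) * A
        = A * (X ^ (m + 1) * (A ^ m * A)) := by noncomm_ring
    _ = A * (X ^ (m + 1) * (B₁ ^ (m + 1) + A ^ m * B₂)) := by rw [hAm1]
    _ = A * (X ^ (m + 1) * B₁ ^ (m + 1)) := by
        rw [mul_add, hXkill, add_zero]
    _ = A * (X ^ (m + 1) * (A ^ (k + m) * B₁ * C ^ k)) := by rw [← hB1m]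
    _ = A * ((X * (X ^ m * A ^ (k + m))) * (B₁ * C ^ k)) := by
        rw [pow_succ']
        noncomm_ring
    _ = A * (X * A ^ k * (B₁ * C ^ k)) := by rw [F6 m, mul_assoc]
    _ = (A * X * A ^ k) * (B₁ * C ^ k) := by noncomm_ring
    _ = A ^ k * (B₁ * C ^ k) := by rw [hPAk]
    _ = A ^ k * B₁ * C ^ k := by rw [mul_assoc]
    _ = B₁ ^ (k + 1) * C ^ k := by rw [L_AB k]
    _ = B₁ := (hCpow k).symm
  constructor
  · exact hT.symm
  · rw [hT]
    rw [hsum]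
    abel
end

section
/- Let A be an n×n complex matrix with k = Ind(A) and let m be a positive integer. Set A₁ = A A^{w_m} A. Then X = A^D A₁ A^† is the unique n×n complex matrix satisfying the three equations X A X = X, A X = A₁ A^†, and X A = A^D A₁. -/
open Matrix

/-- If `A X² = X` then `A^j X^(j+1) = X` for all `j`. -/
lemma aux_pow_absorb {M : Type*} [Monoid M] (A X : M) (h2 : A * X ^ 2 = X) :
    ∀ j : ℕ, A ^ j * X ^ (j + 1) = X := by
  intro j
  induction j with
  | zero => simp
  | succ j ih =>
    have hp : X ^ (j + 1 + 1) = X ^ 2 * X ^ j := by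
      rw [show j + 1 + 1 = 2 + j from by omega, pow_add]
    calc A ^ (j + 1) * X ^ (j + 1 + 1)
        = A ^ j * (A * X ^ 2) * X ^ j := by
          rw [hp, pow_succ A j]; simp only [mul_assoc]
      _ = A ^ j * X ^ (j + 1) := by
          rw [h2, pow_succ' X j]; simp only [mul_assoc]
      _ = X := ih

/-- If `A X² = X` then `A^(j+1) X^(j+1) = A X` for all `j`. -/
lemma aux_pow_collapse {M : Type*} [Monoid M] (A X : M) (h2 : A * X ^ 2 = X) :
    ∀ j : ℕ, A ^ (j + 1) * X ^ (j + 1) = A * X := by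
  intro j
  induction j with
  | zero => simp
  | succ j ih =>
    have hp : X ^ (j + 1 + 1) = X ^ 2 * X ^ j := by
      rw [show j + 1 + 1 = 2 + j from by omega, pow_add]
    calc A ^ (j + 1 + 1) * X ^ (j + 1 + 1)
        = A ^ (j + 1) * (A * X ^ 2) * X ^ j := by
          rw [hp, pow_succ A (j + 1)]; simp only [mul_assoc]
      _ = A ^ (j + 1) * X ^ (j + 1) := by
          rw [h2, pow_succ' X j]; simp only [mul_assoc]
      _ = A * X := ih

/-- `X = A^D A₁ A^†` is the unique solution of the system
`XAX = X`, `AX = A₁ A^†`, `XA = A^D A₁`, where `A₁ = A A^{w_m} A`. -/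
theorem m_WGMP_inverse_unique_solution {n k m : ℕ}
    (A AEP AD Adag : Matrix (Fin n) (Fin n) ℂ)
    (hk : HasIndex A k) (hm : 0 < m)
    (hEP : IsCoreEP A k AEP)
    (hD : IsDrazin A k AD)
    (hdag : IsMoorePenrose A Adag) :
    (AD * (A * (AEP ^ (m + 1) * A ^ m) * A) * Adag) * A *
        (AD * (A * (AEP ^ (m + 1) * A ^ m) * A) * Adag)
      = AD * (A * (AEP ^ (m + 1) * A ^ m) * A) * Adag ∧
    A * (AD * (A * (AEP ^ (m + 1) * A ^ m) * A) * Adag)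
      = (A * (AEP ^ (m + 1) * A ^ m) * A) * Adag ∧
    (AD * (A * (AEP ^ (m + 1) * A ^ m) * A) * Adag) * A
      = AD * (A * (AEP ^ (m + 1) * A ^ m) * A) ∧
    ∀ X : Matrix (Fin n) (Fin n) ℂ,
      X * A * X = X →
      A * X = (A * (AEP ^ (m + 1) * A ^ m) * A) * Adag →
      X * A = AD * (A * (AEP ^ (m + 1) * A ^ m) * A) →
      X = AD * (A * (AEP ^ (m + 1) * A ^ m) * A) * Adag := by
  obtain ⟨h1, h2, -⟩ := hEP
  obtain ⟨-, d2, d3⟩ := hD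
  obtain ⟨p1, -, -, -⟩ := hdag
  set W := AEP ^ (m + 1) * A ^ m with hWdef
  have e1 : A ^ k * AEP ^ (k + 1) = AEP := aux_pow_absorb A AEP h2 k
  have e2 : A ^ (m + 1) * AEP ^ (m + 1) = A * AEP := aux_pow_collapse A AEP h2 m
  -- the core-EP inverse is an outer inverse
  have hout : AEP * A * AEP = AEP := by
    calc AEP * A * AEP
        = AEP * A * (A ^ k * AEP ^ (k + 1)) := by rw [e1]
      _ = AEP * A ^ (k + 1) * AEP ^ (k + 1) := by
          rw [pow_succ' A k]; simp only [mul_assoc]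
      _ = A ^ k * AEP ^ (k + 1) := by rw [h1]
      _ = AEP := e1
  have hADE : AD * A * AEP = AEP := by
    calc AD * A * AEP
        = AD * A * (A ^ k * AEP ^ (k + 1)) := by rw [e1]
      _ = AD * A ^ (k + 1) * AEP ^ (k + 1) := by
          rw [pow_succ' A k]; simp only [mul_assoc]
      _ = A ^ k * AEP ^ (k + 1) := by rw [d3]
      _ = AEP := e1
  -- W is an outer inverse of A
  have hWAW : W * A * W = W := by
    rw [hWdef]
    calc AEP ^ (m + 1) * A ^ m * A * (AEP ^ (m + 1) * A ^ m)
        = AEP ^ m * (AEP * (A ^ (m + 1) * AEP ^ (m + 1))) * A ^ m := by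
          rw [pow_succ A m, pow_succ AEP m]; simp only [mul_assoc]
      _ = AEP ^ m * (AEP * (A * AEP)) * A ^ m := by rw [e2]
      _ = AEP ^ m * AEP * A ^ m := by rw [← mul_assoc AEP A AEP, hout]
      _ = AEP ^ (m + 1) * A ^ m := by rw [pow_succ AEP m]
  -- A^D A₁ = W A
  have hADA1 : AD * (A * W * A) = W * A := by
    rw [hWdef]
    calc AD * (A * (AEP ^ (m + 1) * A ^ m) * A)
        = AD * A * AEP * (AEP ^ m * A ^ m * A) := by
          rw [pow_succ' AEP m]; simp only [mul_assoc]
      _ = AEP * (AEP ^ m * A ^ m * A) := by rw [hADE]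
      _ = AEP ^ (m + 1) * A ^ m * A := by
          rw [pow_succ' AEP m]; simp only [mul_assoc]
  -- A A^D A₁ = A₁
  have hAADA1 : A * (AD * (A * W * A)) = A * W * A := by
    rw [hADA1]; simp only [mul_assoc]
  have hX3 : (AD * (A * W * A) * Adag) * A = AD * (A * W * A) := by
    calc (AD * (A * W * A) * Adag) * A
        = AD * (A * (W * (A * Adag * A))) := by simp only [mul_assoc]
      _ = AD * (A * (W * A)) := by rw [p1]
      _ = AD * (A * W * A) := by simp only [mul_assoc]
  have hX2 : A * (AD * (A * W * A) * Adag) = (A * W * A) * Adag := by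
    rw [← mul_assoc A, hAADA1]
  have hX1 : (AD * (A * W * A) * Adag) * A * (AD * (A * W * A) * Adag)
      = AD * (A * W * A) * Adag := by
    calc (AD * (A * W * A) * Adag) * A * (AD * (A * W * A) * Adag)
        = (AD * (A * W * A)) * (AD * (A * W * A) * Adag) := by rw [hX3]
      _ = (W * A) * (W * A * Adag) := by rw [hADA1]
      _ = (W * A * W) * A * Adag := by simp only [mul_assoc]
      _ = W * A * Adag := by rw [hWAW]
      _ = AD * (A * W * A) * Adag := by rw [hADA1]
  refine ⟨hX1, hX2, hX3, ?_⟩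
  intro X hx1 hx2 hx3
  calc X = X * A * X := hx1.symm
    _ = X * (A * W * A * Adag) := by rw [mul_assoc, hx2]
    _ = (X * A) * (W * (A * Adag)) := by simp only [mul_assoc]
    _ = (AD * (A * W * A)) * (W * (A * Adag)) := by rw [hx3]
    _ = (W * A) * (W * (A * Adag)) := by rw [hADA1]
    _ = (W * A * W) * (A * Adag) := by simp only [mul_assoc]
    _ = W * (A * Adag) := by rw [hWAW]
    _ = AD * (A * W * A) * Adag := by rw [hADA1]; simp only [mul_assoc]
end

section
/- Let A be an n×n complex matrix with k = Ind(A) and let m be a positive integer. Then A^D (A A^{w_m} A) A^† = A^{w_m} A A^†, i.e., the m-weak group MP inverse A^{w_m,†} equals A^{w_m} composed with the orthogonal projector A A^† onto the column space of A. -/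
open Matrix

/-- The `m`-weak group MP inverse `A^D (A A^{w_m} A) A^†` equals
`A^{w_m} A A^†`. -/
theorem m_WGMP_inverse_eq_wgm_proj {n k m : ℕ}
    (A AEP AD Adag : Matrix (Fin n) (Fin n) ℂ)
    (hk : HasIndex A k) (hm : 0 < m)
    (hEP : IsCoreEP A k AEP)
    (hD : IsDrazin A k AD)
    (hdag : IsMoorePenrose A Adag) :
    AD * (A * (AEP ^ (m + 1) * A ^ m) * A) * Adag
      = (AEP ^ (m + 1) * A ^ m) * A * Adag := by
  obtain ⟨-, hX2, -⟩ := hEP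
  obtain ⟨-, hcomm, hDk⟩ := hD
  have hpow : ∀ j : ℕ, A ^ j * AEP ^ (j + 1) = AEP := by
    intro j
    induction j with
    | zero => simp
    | succ j ih =>
      have h1 : A * AEP ^ (j + 2) = AEP ^ (j + 1) := by
        have h2 : AEP ^ (j + 2) = AEP ^ 2 * AEP ^ j := by
          rw [show j + 2 = 2 + j from by omega, pow_add]
        rw [h2, ← mul_assoc, hX2, ← pow_succ']
      rw [pow_succ, mul_assoc, h1, ih]
  have hADA : AD * A ^ (k + 2) = A ^ (k + 1) := by
    rw [pow_succ, ← mul_assoc, hDk, ← pow_succ]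
  have key : AD * A * AEP = AEP := by
    calc AD * A * AEP = AD * A * (A ^ (k + 1) * AEP ^ (k + 2)) := by rw [hpow]
      _ = AD * A ^ (k + 2) * AEP ^ (k + 2) := by
          rw [mul_assoc, ← mul_assoc A, ← pow_succ', ← mul_assoc]
      _ = A ^ (k + 1) * AEP ^ (k + 2) := by rw [hADA]
      _ = AEP := hpow (k + 1)
  calc AD * (A * (AEP ^ (m + 1) * A ^ m) * A) * Adag
      = (AD * A * AEP) * (AEP ^ m * A ^ m * A * Adag) := by
        rw [pow_succ']; simp [mul_assoc]
    _ = (AEP ^ (m + 1) * A ^ m) * A * Adag := by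
        rw [key, pow_succ']; simp [mul_assoc]
end

section
/- Let A be an n×n complex matrix with k = Ind(A) and let m be a positive integer with m ≥ k − 1. Then A^{w_m} A A^† = A^D A A^†, i.e., the m-weak group MP inverse of A coincides with the DMP-inverse A^{D,†} = A^D A A^†. -/
open Matrix

section
variable {R : Type*} [Ring R]

/-- From `A * X^2 = X` we get `A^j * X^(j+1) = X`. -/
lemma ax_pow (A X : R) (h2 : A * X ^ 2 = X) : ∀ j : ℕ, A ^ j * X ^ (j + 1) = X := by
  intro j
  induction j with
  | zero => simp
  | succ j ih =>
    have e1 : X ^ (j + 2) = X ^ 2 * X ^ j := by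
      rw [show j + 2 = 2 + j from by omega, pow_add]
    have e2 : A ^ (j + 1) * X ^ (j + 2) = A ^ j * (A * X ^ 2) * X ^ j := by
      rw [pow_succ A, e1]; simp only [mul_assoc]
    rw [e2, h2, mul_assoc, ← pow_succ']
    exact ih

/-- From `A * X^2 = X` we get `A^(j+1) * X^(j+1) = A * X`. -/
lemma ax_pow' (A X : R) (h2 : A * X ^ 2 = X) : ∀ j : ℕ, A ^ (j + 1) * X ^ (j + 1) = A * X := by
  intro j
  induction j with
  | zero => simp
  | succ j ih =>
    have e1 : X ^ (j + 2) = X ^ 2 * X ^ j := by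
      rw [show j + 2 = 2 + j from by omega, pow_add]
    have e2 : A ^ (j + 2) * X ^ (j + 2) = A ^ (j + 1) * (A * X ^ 2) * X ^ j := by
      rw [pow_succ A (j + 1), e1]; simp only [mul_assoc]
    rw [e2, h2, mul_assoc, ← pow_succ']
    exact ih

lemma key {A X D : R} {k : ℕ}
    (h1 : X * A ^ (k + 1) = A ^ k) (h2 : A * X ^ 2 = X)
    (d1 : D * A * D = D) (d2 : A * D = D * A) (d3 : D * A ^ (k + 1) = A ^ k) :
    X ^ k * A ^ k = D * A := by
  rcases k with _ | s
  · simpa using d3.symm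
  have hc : Commute A D := d2
  have hX : A ^ (s + 1) * X ^ (s + 1 + 1) = X := ax_pow A X h2 (s + 1)
  -- D * A * X = X
  have hDAX : D * A * X = X := by
    calc D * A * X = D * A * (A ^ (s + 1) * X ^ (s + 1 + 1)) := by rw [hX]
      _ = D * A ^ (s + 1 + 1) * X ^ (s + 1 + 1) := by
          rw [pow_succ' A (s + 1)]; simp only [mul_assoc]
      _ = A ^ (s + 1) * X ^ (s + 1 + 1) := by rw [d3]
      _ = X := hX
  -- A^(s+1) * D = A^s  via  A^(s+2) * D = A^(s+1)
  have hAkD : A ^ (s + 1 + 1) * D = A ^ (s + 1) := by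
    rw [(hc.pow_left (s + 1 + 1)).eq]; exact d3
  -- A * X * A^(s+1) = A^(s+1)
  have hAXA : A * X * A ^ (s + 1) = A ^ (s + 1) := by
    calc A * X * A ^ (s + 1) = A * X * (A ^ (s + 1 + 1) * D) := by rw [hAkD]
      _ = A * (X * A ^ (s + 1 + 1)) * D := by simp only [mul_assoc]
      _ = A * A ^ (s + 1) * D := by rw [h1]
      _ = A ^ (s + 1 + 1) * D := by rw [← pow_succ']
      _ = A ^ (s + 1) := hAkD
  -- D*A idempotent
  have hid : IsIdempotentElem (D * A) := by
    show (D * A) * (D * A) = D * A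
    calc (D * A) * (D * A) = (D * A * D) * A := by simp only [mul_assoc]
      _ = D * A := by rw [d1]
  have hDA : D ^ (s + 1) * A ^ (s + 1) = D * A := by
    rw [← (hc.symm.mul_pow (s + 1))]
    exact hid.pow_succ_eq s
  -- A^(s+1) = A^(s+1) * (X^(s+1) * A^(s+1))
  have hAk : A ^ (s + 1) * (X ^ (s + 1) * A ^ (s + 1)) = A ^ (s + 1) := by
    calc A ^ (s + 1) * (X ^ (s + 1) * A ^ (s + 1))
        = (A ^ (s + 1) * X ^ (s + 1)) * A ^ (s + 1) := by rw [mul_assoc]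
      _ = (A * X) * A ^ (s + 1) := by rw [ax_pow' A X h2 s]
      _ = A ^ (s + 1) := hAXA
  -- conclude
  calc X ^ (s + 1) * A ^ (s + 1)
      = (D * A * X) * (X ^ s * A ^ (s + 1)) := by
        rw [hDAX, ← mul_assoc, ← pow_succ']
    _ = (D * A) * (X ^ (s + 1) * A ^ (s + 1)) := by
        rw [pow_succ' X s]; simp only [mul_assoc]
    _ = (D ^ (s + 1) * A ^ (s + 1)) * (X ^ (s + 1) * A ^ (s + 1)) := by rw [hDA]
    _ = D ^ (s + 1) * (A ^ (s + 1) * (X ^ (s + 1) * A ^ (s + 1))) := by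
        simp only [mul_assoc]
    _ = D ^ (s + 1) * A ^ (s + 1) := by rw [hAk]
    _ = D * A := hDA

lemma stab {A X : R} {k : ℕ}
    (h1 : X * A ^ (k + 1) = A ^ k) :
    ∀ j : ℕ, X ^ (k + j) * A ^ (k + j) = X ^ k * A ^ k := by
  intro j
  induction j with
  | zero => rfl
  | succ j ih =>
    have e : X ^ (k + (j + 1)) * A ^ (k + (j + 1)) = X ^ (k + j) * A ^ (k + j) := by
      have eA : A ^ (k + j + 1) = A ^ (k + 1) * A ^ j := by
        rw [← pow_add]; ring_nf
      calc X ^ (k + (j + 1)) * A ^ (k + (j + 1))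
          = X ^ (k + j) * (X * A ^ (k + 1)) * A ^ j := by
            rw [show k + (j + 1) = (k + j) + 1 from by omega, pow_succ X (k + j), eA]
            simp only [mul_assoc]
        _ = X ^ (k + j) * A ^ k * A ^ j := by rw [h1]
        _ = X ^ (k + j) * A ^ (k + j) := by rw [mul_assoc, ← pow_add]
    rw [e, ih]

end

/-- If `m ≥ k - 1`, the `m`-weak group MP inverse of `A` coincides with the
DMP-inverse `A^{D,†} = A^D A A^†`. -/
theorem m_WGMP_inverse_eq_DMP {n k m : ℕ}
    (A AEP AD Adag : Matrix (Fin n) (Fin n) ℂ)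
    (hk : HasIndex A k) (hm : 0 < m) (hmk : k - 1 ≤ m)
    (hEP : IsCoreEP A k AEP)
    (hD : IsDrazin A k AD)
    (hdag : IsMoorePenrose A Adag) :
    (AEP ^ (m + 1) * A ^ m) * A * Adag = AD * A * Adag := by
  obtain ⟨h1, h2, -⟩ := hEP
  obtain ⟨d1, d2, d3⟩ := hD
  have hkm : k ≤ m + 1 := by omega
  obtain ⟨j, hj⟩ : ∃ j, m + 1 = k + j := ⟨m + 1 - k, by omega⟩
  have hmain : AEP ^ (m + 1) * A ^ (m + 1) = AD * A := by
    rw [hj, stab h1 j]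
    exact key h1 h2 d1 d2 d3
  calc (AEP ^ (m + 1) * A ^ m) * A * Adag
      = (AEP ^ (m + 1) * A ^ (m + 1)) * Adag := by
        rw [mul_assoc (AEP ^ (m + 1)) (A ^ m) A, ← pow_succ]
    _ = AD * A * Adag := by rw [hmain]
end

section
/- Let A be an n×n complex matrix with k = Ind(A) and let m be a positive integer. If A is an EP matrix, i.e., R(A) = R(A^*), then A^{w_m} A A^† = A^{w_m}, i.e., the m-weak group MP inverse of A coincides with the m-weak group inverse of A. -/
open Matrix

/-- If `A` is an EP matrix (`R(A) = R(A^*)`), then the `m`-weak group MP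
inverse of `A` coincides with the `m`-weak group inverse of `A`. -/
theorem m_WGMP_inverse_eq_wgm_of_EP {n k m : ℕ}
    (A AEP Adag : Matrix (Fin n) (Fin n) ℂ)
    (hk : HasIndex A k) (hm : 0 < m)
    (hEP : IsCoreEP A k AEP)
    (hdag : IsMoorePenrose A Adag)
    (hEPmat : LinearMap.range A.mulVecLin = LinearMap.range (Aᴴ).mulVecLin) :
    (AEP ^ (m + 1) * A ^ m) * A * Adag = AEP ^ (m + 1) * A ^ m := by
  obtain ⟨h1, h2, h3, h4⟩ := hdag
  -- factor Aᴴ = A * B using the range inclusion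
  have hv : ∀ j, ∃ v, A.mulVec v = Aᴴ.mulVec (Pi.single j 1) := by
    intro j
    have : Aᴴ.mulVecLin (Pi.single j 1) ∈ LinearMap.range A.mulVecLin := by
      rw [hEPmat]; exact ⟨Pi.single j 1, rfl⟩
    obtain ⟨v, hv⟩ := this
    exact ⟨v, hv⟩
  set B : Matrix (Fin n) (Fin n) ℂ := Matrix.of fun i j => (hv j).choose i with hB
  have hAB : A * B = Aᴴ := by
    ext i j
    have := congrFun (hv j).choose_spec i
    simp only [Matrix.mulVec, dotProduct] at this
    simp only [Matrix.mul_apply, hB, Matrix.of_apply]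
    rw [this]
    simp [Pi.single_apply, Finset.sum_ite_eq]
  have key : A * (A * Adag) = A := by
    have h5 : A * Adag * Aᴴ = Aᴴ := by
      calc A * Adag * Aᴴ = A * Adag * (A * B) := by rw [hAB]
        _ = (A * Adag * A) * B := by simp only [Matrix.mul_assoc]
        _ = A * B := by rw [h1]
        _ = Aᴴ := hAB
    have := congrArg Matrix.conjTranspose h5
    rwa [Matrix.conjTranspose_mul, Matrix.conjTranspose_conjTranspose, h3] at this
  obtain ⟨s, rfl⟩ : ∃ s, m = s + 1 := ⟨m - 1, (Nat.succ_pred_eq_of_pos hm).symm⟩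
  calc (AEP ^ (s + 1 + 1) * A ^ (s + 1)) * A * Adag
      = AEP ^ (s + 1 + 1) * A ^ s * (A * (A * Adag)) := by
        rw [pow_succ A s]; simp only [Matrix.mul_assoc]
    _ = AEP ^ (s + 1 + 1) * A ^ (s + 1) := by rw [key, pow_succ A s]; simp only [Matrix.mul_assoc]
end

section
/- Let A be an n×n complex matrix with k = Ind(A) and let m be a positive integer. Then rank(A^{w_m,†}) = rank(A^k). -/
open Matrix

/-- `rank (A^{w_m,†}) = rank (A^k)`. -/
theorem m_WGMP_inverse_rank {n k m : ℕ}
    (A AEP Adag : Matrix (Fin n) (Fin n) ℂ)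
    (hk : HasIndex A k) (hm : 0 < m)
    (hEP : IsCoreEP A k AEP)
    (hdag : IsMoorePenrose A Adag) :
    ((AEP ^ (m + 1) * A ^ m) * A * Adag).rank = (A ^ k).rank := by
  obtain ⟨h1, h2, -⟩ := hEP
  obtain ⟨hd1, -, -, -⟩ := hdag
  have key1 : ∀ j : ℕ, AEP ^ (j + 1) * A ^ (k + j + 1) = A ^ k := by
    intro j
    induction j with
    | zero => simpa using h1
    | succ j ih =>
      have e : AEP ^ (j + 1 + 1) * A ^ (k + (j + 1) + 1)
          = AEP ^ (j + 1) * ((AEP * A ^ (k + 1)) * A ^ (j + 1)) := by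
        rw [show k + (j + 1) + 1 = (k + 1) + (j + 1) by omega, pow_succ AEP (j + 1), pow_add A (k + 1) (j + 1)]
        simp only [mul_assoc]
      rw [e, h1, ← mul_assoc, mul_assoc, ← pow_add,
        show k + (j + 1) = k + j + 1 by omega]
      exact ih
  have key2 : ∀ j : ℕ, A ^ j * AEP ^ (j + 1) = AEP := by
    intro j
    induction j with
    | zero => simp
    | succ j ih =>
      have e : A ^ (j + 1) * AEP ^ (j + 1 + 1)
          = A * ((A ^ j * AEP ^ (j + 1)) * AEP) := by
        rw [pow_succ' A, pow_succ AEP]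
        simp only [mul_assoc]
      rw [e, ih, ← mul_assoc, mul_assoc, ← pow_two, h2]
  set W := AEP ^ (m + 1) * A ^ m * A * Adag with hW
  have hWA : W * A ^ (k + 1) = A ^ k := by
    have e : W * A ^ (k + 1)
        = AEP ^ (m + 1) * (A ^ m * ((A * Adag * A) * A ^ k)) := by
      rw [hW, pow_succ' A k]
      simp only [mul_assoc]
    rw [e, hd1, ← pow_succ' A k, ← pow_add, show m + (k + 1) = k + m + 1 by omega]
    exact key1 m
  refine le_antisymm ?_ ?_
  · calc W.rank ≤ (AEP ^ (m + 1) * A ^ m * A).rank := Matrix.rank_mul_le_left _ _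
      _ ≤ (AEP ^ (m + 1) * A ^ m).rank := Matrix.rank_mul_le_left _ _
      _ ≤ (AEP ^ (m + 1)).rank := Matrix.rank_mul_le_left _ _
      _ = (AEP * AEP ^ m).rank := by rw [pow_succ']
      _ ≤ AEP.rank := Matrix.rank_mul_le_left _ _
      _ = (A ^ k * AEP ^ (k + 1)).rank := by rw [key2 k]
      _ ≤ (A ^ k).rank := Matrix.rank_mul_le_left _ _
  · calc (A ^ k).rank = (W * A ^ (k + 1)).rank := by rw [hWA]
      _ ≤ W.rank := Matrix.rank_mul_le_left _ _
end

section
/- Let A be an n×n complex matrix with k = Ind(A) and let m be a positive integer. Then A^{w_m,†} is an outer inverse of A with range R(A^k) and null space N((A^k)^* A^{m+1} A^†); that is, A^{w_m,†} A A^{w_m,†} = A^{w_m,†}, R(A^{w_m,†}) = R(A^k) and N(A^{w_m,†}) = N((A^k)^* A^{m+1} A^†). -/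
open Matrix

private lemma matrix_ext_of_mulVec {n : ℕ} {M N : Matrix (Fin n) (Fin n) ℂ}
    (h : ∀ v, M *ᵥ v = N *ᵥ v) : M = N := by
  ext i j
  simpa using congrFun (h (Pi.single j 1)) i

private lemma coreEP_aux1 {n : ℕ} {A X : Matrix (Fin n) (Fin n) ℂ}
    (h2 : A * X ^ 2 = X) : ∀ j, A ^ j * X ^ (j + 1) = X := by
  intro j
  induction j with
  | zero => simp
  | succ j ih =>
    have e : A ^ (j + 1) * X ^ (j + 2) = A ^ j * (A * X ^ 2) * X ^ j := by
      rw [pow_succ A j, show X ^ (j+2) = X ^ 2 * X ^ j by rw [← pow_add, add_comm]]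
      noncomm_ring
    rw [e, h2, show A ^ j * X * X ^ j = A ^ j * X ^ (j+1) by
      rw [pow_succ' X j]; noncomm_ring, ih]

private lemma coreEP_aux2 {n k : ℕ} {A X : Matrix (Fin n) (Fin n) ℂ}
    (h1 : X * A ^ (k + 1) = A ^ k) : ∀ j, X ^ j * A ^ (k + j) = A ^ k := by
  intro j
  induction j with
  | zero => simp
  | succ j ih =>
    have e : X ^ (j + 1) * A ^ (k + (j + 1)) = X ^ j * (X * A ^ (k + 1)) * A ^ j := by
      rw [pow_succ X j, show A ^ (k + (j+1)) = A ^ (k+1) * A ^ j by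
        rw [← pow_add]; congr 1; omega]
      noncomm_ring
    rw [e, h1, show X ^ j * A ^ k * A ^ j = X ^ j * A ^ (k + j) by
      rw [pow_add]; noncomm_ring, ih]

private lemma coreEP_aux3 {n : ℕ} {A X : Matrix (Fin n) (Fin n) ℂ}
    (h2 : A * X ^ 2 = X) : ∀ j, A ^ (j + 1) * X ^ (j + 1) = A * X := by
  intro j
  induction j with
  | zero => simp
  | succ j ih =>
    have e : A ^ (j + 2) * X ^ (j + 2) = A ^ (j + 1) * (A * X ^ 2) * X ^ j := by
      rw [show A ^ (j+2) = A ^ (j+1) * A by rw [← pow_succ],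
          show X ^ (j+2) = X ^ 2 * X ^ j by rw [← pow_add, add_comm]]
      noncomm_ring
    rw [e, h2, show A ^ (j+1) * X * X ^ j = A ^ (j+1) * X ^ (j+1) by
      rw [pow_succ' X j]; noncomm_ring, ih]

-- X A X = X
private lemma coreEP_outer {n k : ℕ} {A X : Matrix (Fin n) (Fin n) ℂ}
    (h1 : X * A ^ (k + 1) = A ^ k) (h2 : A * X ^ 2 = X) : X * A * X = X := by
  have h := coreEP_aux1 h2 k
  calc X * A * X = X * A * (A ^ k * X ^ (k+1)) := by rw [h]
    _ = X * A ^ (k+1) * X ^ (k+1) := by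
        rw [← mul_assoc, mul_assoc X A (A ^ k), ← pow_succ' A k]
    _ = A ^ k * X ^ (k+1) := by rw [h1]
    _ = X := h

-- (A X) A^k = A^k, using the rank condition
private lemma coreEP_proj {n k : ℕ} {A X : Matrix (Fin n) (Fin n) ℂ}
    (hk : (A ^ (k + 1)).rank = (A ^ k).rank)
    (h1 : X * A ^ (k + 1) = A ^ k) : (A * X) * A ^ k = A ^ k := by
  have hle : LinearMap.range (A ^ (k+1)).mulVecLin ≤ LinearMap.range (A ^ k).mulVecLin := by
    rw [show A ^ (k+1) = A ^ k * A by rw [← pow_succ], Matrix.mulVecLin_mul]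
    exact LinearMap.range_comp_le_range _ _
  have hrange : LinearMap.range (A ^ (k+1)).mulVecLin = LinearMap.range (A ^ k).mulVecLin :=
    Submodule.eq_of_le_of_finrank_eq hle hk
  have hfix : (A * X) * A ^ (k+1) = A ^ (k+1) := by
    calc A * X * A ^ (k+1) = A * (X * A ^ (k+1)) := by rw [mul_assoc]
      _ = A * A ^ k := by rw [h1]
      _ = A ^ (k+1) := by rw [← pow_succ']
  apply matrix_ext_of_mulVec
  intro v
  have hv : (A ^ k) *ᵥ v ∈ LinearMap.range (A ^ (k+1)).mulVecLin := by
    rw [hrange]; exact ⟨v, rfl⟩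
  obtain ⟨w, hw⟩ := hv
  simp only [Matrix.mulVecLin_apply] at hw
  calc (A * X * A ^ k) *ᵥ v = (A * X) *ᵥ ((A ^ k) *ᵥ v) := by
        rw [Matrix.mulVec_mulVec]
    _ = (A * X) *ᵥ ((A ^ (k+1)) *ᵥ w) := by rw [hw]
    _ = (A * X * A ^ (k+1)) *ᵥ w := by rw [Matrix.mulVec_mulVec]
    _ = (A ^ (k+1)) *ᵥ w := by rw [hfix]
    _ = (A ^ k) *ᵥ v := hw

set_option maxHeartbeats 1000000 in
/-- `A^{w_m,†}` is an outer inverse of `A` with range `R(A^k)` and null space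
`N((A^k)^* A^{m+1} A^†)`. -/
theorem m_WGMP_inverse_outer_inverse {n k m : ℕ}
    (A AEP Adag : Matrix (Fin n) (Fin n) ℂ)
    (hk : HasIndex A k) (hm : 0 < m)
    (hEP : IsCoreEP A k AEP)
    (hdag : IsMoorePenrose A Adag) :
    ((AEP ^ (m + 1) * A ^ m) * A * Adag) * A * ((AEP ^ (m + 1) * A ^ m) * A * Adag)
      = (AEP ^ (m + 1) * A ^ m) * A * Adag ∧
    LinearMap.range ((AEP ^ (m + 1) * A ^ m) * A * Adag).mulVecLin
      = LinearMap.range (A ^ k).mulVecLin ∧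
    LinearMap.ker ((AEP ^ (m + 1) * A ^ m) * A * Adag).mulVecLin
      = LinearMap.ker ((A ^ k)ᴴ * A ^ (m + 1) * Adag).mulVecLin := by
  obtain ⟨h1, h2, h3⟩ := hEP
  obtain ⟨hd1, hd2, hd3, hd4⟩ := hdag
  set X := AEP with hX
  set W := X ^ (m + 1) * A ^ m with hWdef
  -- key facts
  have hXAX : X * A * X = X := coreEP_outer h1 h2
  have hProj : (A * X) * A ^ k = A ^ k := coreEP_proj hk.1 h1
  have hXP : X ^ (m + 1) * (A * X) = X ^ (m + 1) := by
    rw [pow_succ X m, mul_assoc (X ^ m) X (A * X), ← mul_assoc X A X, hXAX]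
  have hPH : (A ^ k)ᴴ * (A * X) = (A ^ k)ᴴ := by
    have h := congrArg conjTranspose hProj
    rwa [conjTranspose_mul, h3] at h
  -- W is an outer inverse of A
  have hWAW : W * A * W = W := by
    rw [hWdef]
    rw [mul_assoc (X ^ (m+1)) (A ^ m) A, ← pow_succ A m]
    rw [← mul_assoc (X ^ (m+1) * A ^ (m+1)) (X ^ (m+1)) (A ^ m)]
    rw [mul_assoc (X ^ (m+1)) (A ^ (m+1)) (X ^ (m+1))]
    rw [coreEP_aux3 h2 m, hXP]
  -- Part 1: outer inverse
  have part1 : (W * A * Adag) * A * (W * A * Adag) = W * A * Adag := by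
    rw [mul_assoc W A Adag, mul_assoc W (A * Adag) A, hd1, ← mul_assoc W A Adag]
    rw [← mul_assoc (W * A) (W * A) Adag, ← mul_assoc (W * A) W A, hWAW]
  -- factorization T = A^k * Z  (for range ≤)
  have hfac : W * A * Adag = A ^ k * (X ^ (k+1) * (X ^ m * (A ^ m * (A * Adag)))) := by
    have e : A ^ k * X ^ (k+1) * X ^ m * A ^ m * A * Adag = W * A * Adag := by
      rw [coreEP_aux1 h2 k, ← pow_succ' X m, hWdef]
    rw [← e]; simp only [mul_assoc]
  -- T * A^(k+1) = A^k  (for range ≥)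
  have hTA : (W * A * Adag) * A ^ (k + 1) = A ^ k := by
    rw [pow_succ' A k, ← mul_assoc (W * A * Adag) A (A ^ k)]
    rw [mul_assoc W A Adag, mul_assoc W (A * Adag) A, hd1]
    rw [hWdef, mul_assoc (X ^ (m+1)) (A ^ m) A, ← pow_succ A m]
    rw [mul_assoc (X ^ (m+1)) (A ^ (m+1)) (A ^ k), ← pow_add A (m+1) k]
    rw [show m + 1 + k = k + (m + 1) from by omega]
    exact coreEP_aux2 h1 (m+1)
  have part2 : LinearMap.range (W * A * Adag).mulVecLin
      = LinearMap.range (A ^ k).mulVecLin := by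
    apply le_antisymm
    · have h := LinearMap.range_comp_le_range
        ((X ^ (k+1) * (X ^ m * (A ^ m * (A * Adag))))).mulVecLin (A ^ k).mulVecLin
      rw [← Matrix.mulVecLin_mul, ← hfac] at h
      exact h
    · have h := LinearMap.range_comp_le_range (A ^ (k+1)).mulVecLin
        (W * A * Adag).mulVecLin
      rw [← Matrix.mulVecLin_mul, hTA] at h
      exact h
  -- B = C * T
  have hB : (A ^ k)ᴴ * A ^ (m+1) * (W * A * Adag) = (A ^ k)ᴴ * A ^ (m+1) * Adag := by
    rw [hWdef]
    simp only [← mul_assoc]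
    rw [mul_assoc ((A ^ k)ᴴ) (A ^ (m+1)) (X ^ (m+1)), coreEP_aux3 h2 m, hPH]
    rw [mul_assoc ((A ^ k)ᴴ) (A ^ m) A, ← pow_succ A m]
  -- T = D * B
  have hT : (X ^ (m+1) * (X ^ (k+1))ᴴ * Aᴴ) * ((A ^ k)ᴴ * A ^ (m+1) * Adag)
      = W * A * Adag := by
    rw [hWdef]
    simp only [← mul_assoc]
    rw [mul_assoc (X ^ (m+1) * (X ^ (k+1))ᴴ) Aᴴ ((A ^ k)ᴴ),
      ← conjTranspose_mul (A ^ k) A, ← pow_succ A k]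
    rw [mul_assoc (X ^ (m+1)) ((X ^ (k+1))ᴴ) ((A ^ (k+1))ᴴ),
      ← conjTranspose_mul (A ^ (k+1)) (X ^ (k+1))]
    rw [coreEP_aux3 h2 k, h3, hXP]
    rw [pow_succ A m, ← mul_assoc (X ^ (m+1)) (A ^ m) A]
  have part3 : LinearMap.ker (W * A * Adag).mulVecLin
      = LinearMap.ker ((A ^ k)ᴴ * A ^ (m+1) * Adag).mulVecLin := by
    apply le_antisymm
    · have h := LinearMap.ker_le_ker_comp (W * A * Adag).mulVecLin
        ((A ^ k)ᴴ * A ^ (m+1)).mulVecLin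
      rw [← Matrix.mulVecLin_mul, hB] at h
      exact h
    · have h := LinearMap.ker_le_ker_comp ((A ^ k)ᴴ * A ^ (m+1) * Adag).mulVecLin
        (X ^ (m+1) * (X ^ (k+1))ᴴ * Aᴴ).mulVecLin
      rw [← Matrix.mulVecLin_mul, hT] at h
      exact h
  exact ⟨part1, part2, part3⟩
end

section
/- Let A be an n×n complex matrix with k = Ind(A) and let m be a positive integer. Then A^{w_m,†} A is idempotent, with R(A^{w_m,†} A) = R(A^k) and N(A^{w_m,†} A) = N((A^k)^* A^{m+1}); i.e., A^{w_m,†} A is the projector onto R(A^k) along N((A^k)^* A^{m+1}). -/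
open Matrix

section Aux

variable {n : ℕ} {A X : Matrix (Fin n) (Fin n) ℂ}

/-- `A^t * X^(t+1) = X` from `A * X^2 = X`. -/
lemma coreEP_F0 (h2 : A * X ^ 2 = X) : ∀ t, A ^ t * X ^ (t + 1) = X := by
  intro t
  induction t with
  | zero => simp
  | succ t ih =>
    have e : A ^ (t + 1) * X ^ (t + 2) = A ^ t * (A * X ^ 2) * X ^ t := by
      rw [pow_succ A, show X ^ (t + 2) = X ^ 2 * X ^ t by rw [← pow_add]; ring_nf]
      simp only [mul_assoc]
    rw [e, h2, mul_assoc, ← pow_succ']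
    exact ih

/-- `A^(t+1) * X^(t+1) = A * X` from `A * X^2 = X`. -/
lemma coreEP_F1 (h2 : A * X ^ 2 = X) : ∀ t, A ^ (t + 1) * X ^ (t + 1) = A * X := by
  intro t
  induction t with
  | zero => simp
  | succ t ih =>
    have e : A ^ (t + 2) * X ^ (t + 2) = A ^ (t + 1) * (A * X ^ 2) * X ^ t := by
      rw [show A ^ (t + 2) = A ^ (t + 1) * A by rw [← pow_succ],
        show X ^ (t + 2) = X ^ 2 * X ^ t by rw [← pow_add]; ring_nf]
      simp only [mul_assoc]
    rw [e, h2, mul_assoc, ← pow_succ']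
    exact ih

/-- `X^t * A^(k+t) = A^k` from `X * A^(k+1) = A^k`. -/
lemma coreEP_F2 {k : ℕ} (h1 : X * A ^ (k + 1) = A ^ k) :
    ∀ t, X ^ t * A ^ (k + t) = A ^ k := by
  intro t
  induction t with
  | zero => simp
  | succ t ih =>
    have e : X ^ (t + 1) * A ^ (k + (t + 1)) = X ^ t * (X * A ^ (k + 1)) * A ^ t := by
      rw [pow_succ X, show A ^ (k + (t + 1)) = A ^ (k + 1) * A ^ t by
        rw [← pow_add]; ring_nf]
      simp only [mul_assoc]
    rw [e, h1, mul_assoc, ← pow_add]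
    exact ih

end Aux

/-- `A^{w_m,†} A` is the projector onto `R(A^k)` along
`N((A^k)^* A^{m+1})`. -/
theorem m_WGMP_inverse_right_projector {n k m : ℕ}
    (A AEP Adag : Matrix (Fin n) (Fin n) ℂ)
    (hk : HasIndex A k) (hm : 0 < m)
    (hEP : IsCoreEP A k AEP)
    (hdag : IsMoorePenrose A Adag) :
    (((AEP ^ (m + 1) * A ^ m) * A * Adag) * A) * (((AEP ^ (m + 1) * A ^ m) * A * Adag) * A)
      = ((AEP ^ (m + 1) * A ^ m) * A * Adag) * A ∧
    LinearMap.range (((AEP ^ (m + 1) * A ^ m) * A * Adag) * A).mulVecLin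
      = LinearMap.range (A ^ k).mulVecLin ∧
    LinearMap.ker (((AEP ^ (m + 1) * A ^ m) * A * Adag) * A).mulVecLin
      = LinearMap.ker ((A ^ k)ᴴ * A ^ (m + 1)).mulVecLin := by
  obtain ⟨h1, h2, h3⟩ := hEP
  obtain ⟨hA, -, -, -⟩ := hdag
  set X := AEP with hX
  -- simplify the projector
  have hP : ((X ^ (m + 1) * A ^ m) * A * Adag) * A = X ^ (m + 1) * A ^ (m + 1) := by
    rw [mul_assoc (X ^ (m + 1) * A ^ m), mul_assoc (X ^ (m + 1) * A ^ m), hA,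
      mul_assoc, ← pow_succ]
  rw [hP]
  have F0 := coreEP_F0 h2
  have F1 := coreEP_F1 h2
  have F2 := coreEP_F2 h1
  -- X * A * X = X
  have F3 : X * A * X = X := by
    have : X * A * X = X * (A ^ (k + 1) * X ^ (k + 1)) := by
      rw [F1 k]; rw [mul_assoc]
    rw [this, ← mul_assoc, h1, F0 k]
  -- A * X * A^k = A^k
  have F4 : A * X * A ^ k = A ^ k := by
    conv_lhs => rw [← h1]
    rw [← mul_assoc, mul_assoc A X X, ← pow_two, h2, h1]
  -- X^(m+1) * A * X = X^(m+1)
  have F5 : X ^ (m + 1) * A * X = X ^ (m + 1) := by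
    rw [pow_succ X, mul_assoc, mul_assoc, ← mul_assoc X A X, F3]
  refine ⟨?_, ?_, ?_⟩
  · -- idempotency
    calc X ^ (m + 1) * A ^ (m + 1) * (X ^ (m + 1) * A ^ (m + 1))
        = X ^ (m + 1) * (A ^ (m + 1) * X ^ (m + 1)) * A ^ (m + 1) := by
          rw [mul_assoc, mul_assoc, mul_assoc]
      _ = X ^ (m + 1) * (A * X) * A ^ (m + 1) := by rw [F1 m]
      _ = X ^ (m + 1) * A * X * A ^ (m + 1) := by rw [mul_assoc (X ^ (m+1)) A X]
      _ = X ^ (m + 1) * A ^ (m + 1) := by rw [F5]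
  · -- range
    apply le_antisymm
    · have e : X ^ (m + 1) * A ^ (m + 1) = A ^ k * (X ^ (k + 1) * (X ^ m * A ^ (m + 1))) := by
        rw [← mul_assoc, F0 k, ← mul_assoc, ← pow_succ']
      rw [e, mulVecLin_mul]
      exact LinearMap.range_comp_le_range _ _
    · have e : A ^ k = (X ^ (m + 1) * A ^ (m + 1)) * A ^ k := by
        rw [mul_assoc, ← pow_add, add_comm (m + 1) k, F2 (m + 1)]
      conv_lhs => rw [e]
      rw [mulVecLin_mul]
      exact LinearMap.range_comp_le_range _ _
  · -- kernel
    have hH : (A ^ k)ᴴ = (A ^ k)ᴴ * (A * X) := by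
      conv_lhs => rw [← F4]
      rw [conjTranspose_mul, h3]
    have e1 : (A ^ k)ᴴ * A ^ (m + 1)
        = ((A ^ k)ᴴ * A ^ (m + 1)) * (X ^ (m + 1) * A ^ (m + 1)) := by
      conv_lhs => rw [hH, ← F1 m]
      simp only [mul_assoc]
    have hAX : A * X = A ^ k * (A * X ^ (k + 1)) := by
      rw [← mul_assoc, ← pow_succ, F1 k]
    have e2 : X ^ (m + 1) * A ^ (m + 1)
        = (X ^ (m + 1) * (A * X ^ (k + 1))ᴴ) * ((A ^ k)ᴴ * A ^ (m + 1)) := by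
      conv_lhs => rw [← F5]
      rw [mul_assoc (X ^ (m + 1)) A X, ← h3, hAX, conjTranspose_mul]
      simp only [mul_assoc]
    apply le_antisymm
    · intro v hv
      have hv' : (X ^ (m + 1) * A ^ (m + 1)).mulVec v = 0 := by
        simpa [LinearMap.mem_ker, mulVecLin_apply] using hv
      show ((A ^ k)ᴴ * A ^ (m + 1)).mulVecLin v = 0
      rw [mulVecLin_apply, e1, ← Matrix.mulVec_mulVec, hv', Matrix.mulVec_zero]
    · intro v hv
      have hv' : ((A ^ k)ᴴ * A ^ (m + 1)).mulVec v = 0 := by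
        simpa [LinearMap.mem_ker, mulVecLin_apply] using hv
      show (X ^ (m + 1) * A ^ (m + 1)).mulVecLin v = 0
      rw [mulVecLin_apply, e2, ← Matrix.mulVec_mulVec, hv', Matrix.mulVec_zero]
end

section
/- Let A be an n×n complex matrix with k = Ind(A), let m be a positive integer, set A₁ = A A^{w_m} A, and let X be an n×n complex matrix. The following conditions are equivalent: (a) X = A^{w_m,†}; (b) X A X = X, A X = A₁ A^† and X A A^* = A^{w_m} A A^*; (c) X A X = X, A X = A₁ A^† and X A^k = A^{w_m} A^k; (d) X A X = X, X A = A^{w_m} A and A^k X = A₁^k A^†; (e) X A X = X, X A = A^{w_m} A and A^* A X = A^* A₁ A^†. -/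
open Matrix

section Aux
variable {M : Type*} [Monoid M] {a e : M} {k : ℕ}

private lemma pows (b : M) (n : ℕ) (y : M) : b ^ (n + 1) * y = b * (b ^ n * y) := by
  rw [pow_succ', mul_assoc]

private lemma pows2 (b : M) (n : ℕ) (y : M) : b ^ (n + 1) * y = b ^ n * (b * y) := by
  rw [pow_succ, mul_assoc]

private lemma c_comm (b : M) (i : ℕ) (y : M) : b ^ i * (b * y) = b * (b ^ i * y) := by
  rw [← mul_assoc, pow_mul_comm', mul_assoc]

private lemma c_ppcomm (b : M) (i j : ℕ) (y : M) : b ^ i * (b ^ j * y) = b ^ j * (b ^ i * y) := by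
  rw [← mul_assoc, pow_mul_comm, mul_assoc]

private lemma c_h1 (h1 : e * a ^ (k + 1) = a ^ k) (x : M) :
    e * (a * (a ^ k * x)) = a ^ k * x := by
  rw [← mul_assoc, ← mul_assoc, mul_assoc e a (a ^ k), ← pow_succ', h1]

private lemma c_h2 (h2 : a * (e * e) = e) (x : M) :
    a * (e * (e * x)) = e * x := by
  rw [← mul_assoc, ← mul_assoc, mul_assoc a e e, h2]

private lemma c_aje (h2 : a * (e * e) = e) : ∀ j : ℕ, ∀ x : M,
    a ^ j * (e * (e ^ j * x)) = e * x
  | 0, x => by simp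
  | j + 1, x => by
    rw [pows2 a j, pows e j, c_h2 h2, c_aje h2 j]

private lemma c_eka (h1 : e * a ^ (k + 1) = a ^ k) : ∀ j : ℕ, ∀ x : M,
    e ^ j * (a ^ k * (a ^ j * x)) = a ^ k * x
  | 0, x => by simp
  | j + 1, x => by
    rw [pows2 e j, pows a j, c_comm a k, c_h1 h1, c_eka h1 j]

private lemma c_eae (h1 : e * a ^ (k + 1) = a ^ k) (h2 : a * (e * e) = e) (x : M) :
    e * (a * (e * x)) = e * x := by
  conv_lhs => rw [← c_aje h2 k x]
  rw [c_h1 h1, c_aje h2 k]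

private lemma c_asea (h2 : a * (e * e) = e) : ∀ s : ℕ, ∀ x : M,
    a ^ (s + 1) * (e ^ (s + 1) * x) = a * (e * x)
  | 0, x => by simp
  | s + 1, x => by
    rw [pows2 a (s + 1), pows e (s + 1), pows e s, c_h2 h2, ← pows e s, c_asea h2 s]

private lemma c_We (h1 : e * a ^ (k + 1) = a ^ k) (h2 : a * (e * e) = e) (s : ℕ) (x : M) :
    e ^ s * (a ^ s * (e * x)) = e * x := by
  conv_lhs => rw [← c_aje h2 k x]
  rw [c_ppcomm a s k, c_eka h1 s, c_aje h2 k]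

private lemma c_proj (h1 : e * a ^ (k + 1) = a ^ k) (h2 : a * (e * e) = e) (s : ℕ) (x : M) :
    e ^ s * (a ^ s * (a * (e * x))) = a * (e * x) := by
  conv_lhs => rw [← c_aje h2 k x]
  rw [← c_comm a k, c_ppcomm a s k, c_eka h1 s, c_comm a k, c_aje h2 k]

private lemma lem_inv_pow (h : e * a = 1) : ∀ s : ℕ, e ^ s * a ^ s = 1
  | 0 => by simp
  | s + 1 => by
    rw [pows2 e s, pow_succ' a s, ← mul_assoc e a, h, one_mul, lem_inv_pow h s]

private lemma lem_G7 {b c : M} (h : b * b = c * b) : ∀ j : ℕ, b ^ (j + 1) = c ^ j * b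
  | 0 => by simp
  | j + 1 => by
    rw [pow_succ, lem_G7 h j, mul_assoc, h, ← mul_assoc, ← pow_succ]

end Aux

/-- Characterizations of the `m`-WGMP inverse via the outer inverse equation
`XAX = X`. Here `A₁ = A A^{w_m} A`. -/
theorem m_WGMP_inverse_characterizations_outer {n k m : ℕ}
    (A AEP Adag X : Matrix (Fin n) (Fin n) ℂ)
    (hk : HasIndex A k) (hm : 0 < m)
    (hEP : IsCoreEP A k AEP)
    (hdag : IsMoorePenrose A Adag) :
    [X = (AEP ^ (m + 1) * A ^ m) * A * Adag,
     X * A * X = X ∧ A * X = (A * (AEP ^ (m + 1) * A ^ m) * A) * Adag ∧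
       X * A * Aᴴ = (AEP ^ (m + 1) * A ^ m) * A * Aᴴ,
     X * A * X = X ∧ A * X = (A * (AEP ^ (m + 1) * A ^ m) * A) * Adag ∧
       X * A ^ k = (AEP ^ (m + 1) * A ^ m) * A ^ k,
     X * A * X = X ∧ X * A = (AEP ^ (m + 1) * A ^ m) * A ∧
       A ^ k * X = (A * (AEP ^ (m + 1) * A ^ m) * A) ^ k * Adag,
     X * A * X = X ∧ X * A = (AEP ^ (m + 1) * A ^ m) * A ∧
       Aᴴ * A * X = Aᴴ * (A * (AEP ^ (m + 1) * A ^ m) * A) * Adag].TFAE := by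
  obtain ⟨h1, h2, _h3⟩ := hEP
  obtain ⟨p1, p2, p3, p4⟩ := hdag
  rw [pow_two] at h2
  simp only [← Matrix.star_eq_conjTranspose] at p3 p4 ⊢
  obtain ⟨t, rfl⟩ : ∃ t, m = t + 1 := ⟨m - 1, (Nat.succ_pred_eq_of_pos hm).symm⟩
  set w := AEP ^ (t + 1 + 1) * A ^ (t + 1) with hw
  set A1 := A * w * A with hA1
  -- Moore–Penrose continuation lemmas
  have h4 : star A * star Adag = Adag * A := by rw [← p4, StarMul.star_mul]
  have h4' : star Adag * star A = A * Adag := by rw [← p3, StarMul.star_mul]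
  have cp1 : ∀ Y : Matrix (Fin n) (Fin n) ℂ, A * (Adag * (A * Y)) = A * Y := by
    intro Y; rw [← mul_assoc, ← mul_assoc, p1]
  have cp1' : A * (Adag * A) = A := by rw [← mul_assoc, p1]
  have cdast : Adag * (A * star A) = star A := by
    calc Adag * (A * star A) = (Adag * A) * star A := by rw [mul_assoc]
      _ = star (Adag * A) * star A := by rw [p4]
      _ = star (A * (Adag * A)) := (StarMul.star_mul _ _).symm
      _ = star A := by rw [← mul_assoc, p1]
  -- core-EP continuation lemmas
  have cae2 : ∀ Z : Matrix (Fin n) (Fin n) ℂ, A * (AEP ^ (t + 1 + 1) * Z) = AEP ^ (t + 1) * Z := by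
    intro Z; rw [pows AEP (t + 1), pows AEP t, c_h2 h2]
  have haw : ∀ Z : Matrix (Fin n) (Fin n) ℂ, A * (w * Z) = AEP ^ (t + 1) * (A ^ (t + 1) * Z) := by
    intro Z; rw [hw, mul_assoc, cae2]
  have cW : ∀ Y : Matrix (Fin n) (Fin n) ℂ, w * (A * (w * Y)) = w * Y := by
    intro Y
    rw [haw, hw, mul_assoc, c_asea h2 t, pows2 AEP (t + 1), c_eae h1 h2,
      ← pows2 AEP (t + 1), ← mul_assoc]
  have cPW : ∀ Y : Matrix (Fin n) (Fin n) ℂ, A * (AEP * (w * Y)) = w * Y := by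
    intro Y
    rw [hw, mul_assoc, pows AEP (t + 1), c_h2 h2]
  have cG4 : ∀ Y : Matrix (Fin n) (Fin n) ℂ, w * (A * (A * (w * Y))) = A * (w * Y) := by
    intro Y
    rw [haw, pows AEP t, hw, mul_assoc, ← pows2 A (t + 1), c_We h1 h2 (t + 1 + 1)]
  have cG6 : A1 * A1 = A * A1 := by
    rw [hA1]; simp only [mul_assoc]; rw [cG4]
  have cG7 : ∀ j : ℕ, A1 ^ (j + 1) = A ^ j * A1 := lem_G7 cG6
  have hc : ∀ Y : Matrix (Fin n) (Fin n) ℂ, A * (AEP * Y) = Y → AEP ^ k * (A ^ k * Y) = Y := by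
    intro Y hy
    conv_lhs => rw [← hy]
    rw [c_proj h1 h2 k, hy]
  have k0 : k = 0 → w * A = 1 ∧ Adag = AEP ∧ w = AEP := by
    rintro rfl
    have h1' : AEP * A = 1 := by simpa using h1
    have hae : A * AEP = 1 := mul_eq_one_comm.mp h1'
    have hda : Adag * A = 1 := by
      calc Adag * A = (AEP * A) * (Adag * A) := by rw [h1', one_mul]
        _ = AEP * (A * Adag * A) := by simp only [mul_assoc]
        _ = AEP * A := by rw [p1]
        _ = 1 := h1'
    have hd : Adag = AEP := by
      calc Adag = Adag * (A * AEP) := by rw [hae, mul_one]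
        _ = (Adag * A) * AEP := by rw [← mul_assoc]
        _ = AEP := by rw [hda, one_mul]
    have hwa1 : w * A = 1 := by
      rw [hw, mul_assoc, ← pow_succ, lem_inv_pow h1' (t + 1 + 1)]
    have hwe : w = AEP := by
      rw [hw, pows AEP (t + 1), lem_inv_pow h1' (t + 1), mul_one]
    exact ⟨hwa1, hd, hwe⟩
  tfae_have 1 → 2 := by
    rintro rfl
    refine ⟨?_, ?_, ?_⟩
    · simp only [mul_assoc]; rw [cp1, cW]
    · rw [hA1]; simp only [mul_assoc]
    · simp only [mul_assoc]; rw [cdast]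
  tfae_have 2 → 1 := by
    rintro ⟨hXAX, hAX, hst⟩
    rw [hA1] at hAX
    have hAX' : A * X = A * (w * (A * Adag)) := by simpa only [mul_assoc] using hAX
    have h' : X * (A * star A) = w * (A * star A) := by simpa only [mul_assoc] using hst
    have hXa : X * A = w * A := by
      calc X * A = X * (A * (star A * star Adag)) := by rw [h4, cp1']
        _ = X * (A * star A) * star Adag := by simp only [mul_assoc]
        _ = w * (A * star A) * star Adag := by rw [h']
        _ = w * A := by simp only [mul_assoc]; rw [h4, cp1']
    calc X = X * A * X := hXAX.symm
      _ = w * A * X := by rw [hXa]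
      _ = w * (A * X) := by rw [mul_assoc]
      _ = w * (A * (w * (A * Adag))) := by rw [hAX']
      _ = w * (A * Adag) := cW _
      _ = w * A * Adag := (mul_assoc _ _ _).symm
  tfae_have 1 → 3 := by
    rintro rfl
    refine ⟨?_, ?_, ?_⟩
    · simp only [mul_assoc]; rw [cp1, cW]
    · rw [hA1]; simp only [mul_assoc]
    · cases k with
      | zero =>
        obtain ⟨hwa1, hd, hwe⟩ := k0 rfl
        simp only [pow_zero, mul_one]
        rw [hwa1, one_mul, hd, hwe]
      | succ s =>
        simp only [mul_assoc, pow_succ']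
        rw [cp1]
  tfae_have 3 → 1 := by
    rintro ⟨hXAX, hAX, hXk⟩
    rw [hA1] at hAX
    have hAX' : A * X = A * (w * (A * Adag)) := by simpa only [mul_assoc] using hAX
    have key : A * (w * (A * Adag)) =
        A ^ k * (AEP * (AEP ^ k * (AEP ^ t * (A ^ (t + 1) * (A * Adag))))) := by
      rw [haw, pows AEP t, ← c_aje h2 k]
    calc X = X * A * X := hXAX.symm
      _ = X * (A * X) := by rw [mul_assoc]
      _ = X * (A * (w * (A * Adag))) := by rw [hAX']
      _ = X * (A ^ k * (AEP * (AEP ^ k * (AEP ^ t * (A ^ (t + 1) * (A * Adag)))))) := by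
          rw [key]
      _ = (X * A ^ k) * (AEP * (AEP ^ k * (AEP ^ t * (A ^ (t + 1) * (A * Adag))))) := by
          rw [← mul_assoc]
      _ = (w * A ^ k) * (AEP * (AEP ^ k * (AEP ^ t * (A ^ (t + 1) * (A * Adag))))) := by
          rw [hXk]
      _ = w * (A ^ k * (AEP * (AEP ^ k * (AEP ^ t * (A ^ (t + 1) * (A * Adag)))))) := by
          rw [mul_assoc]
      _ = w * (AEP * (AEP ^ t * (A ^ (t + 1) * (A * Adag)))) := by rw [c_aje h2 k]
      _ = w * (AEP ^ (t + 1) * (A ^ (t + 1) * (A * Adag))) := by rw [← pows AEP t]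
      _ = w * (A * Adag) := by
          rw [hw, mul_assoc, c_asea h2 t, pows2 AEP (t + 1), c_eae h1 h2,
            ← pows2 AEP (t + 1), ← mul_assoc]
      _ = w * A * Adag := (mul_assoc _ _ _).symm
  tfae_have 1 → 4 := by
    rintro rfl
    refine ⟨?_, ?_, ?_⟩
    · simp only [mul_assoc]; rw [cp1, cW]
    · simp only [mul_assoc]; rw [cp1']
    · cases k with
      | zero =>
        obtain ⟨hwa1, hd, hwe⟩ := k0 rfl
        simp only [pow_zero, one_mul]
        rw [hwa1, one_mul]
      | succ s =>
        rw [cG7 s, hA1]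
        simp only [mul_assoc]
        rw [pows2 A s]
  tfae_have 4 → 1 := by
    rintro ⟨hXAX, hXa4, hAkX⟩
    have hX1 : X = w * (A * X) := by
      conv_lhs => rw [← hXAX]
      rw [hXa4, mul_assoc]
    have hPX : A * (AEP * X) = X := by
      conv_lhs => rw [hX1]
      rw [cPW, ← hX1]
    cases k with
    | zero =>
      obtain ⟨hwa1, hd, hwe⟩ := k0 rfl
      simp only [pow_zero, one_mul] at hAkX
      rw [hAkX, hwa1, one_mul]
    | succ s =>
      calc X = AEP ^ (s + 1) * (A ^ (s + 1) * X) := (hc X hPX).symm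
        _ = AEP ^ (s + 1) * (A1 ^ (s + 1) * Adag) := by rw [hAkX]
        _ = AEP ^ (s + 1) * (A ^ (s + 1) * (w * (A * Adag))) := by
            rw [cG7 s, hA1]
            simp only [mul_assoc]
            rw [← pows2 A s]
        _ = w * (A * Adag) := hc _ (cPW _)
        _ = w * A * Adag := (mul_assoc _ _ _).symm
  tfae_have 1 → 5 := by
    rintro rfl
    refine ⟨?_, ?_, ?_⟩
    · simp only [mul_assoc]; rw [cp1, cW]
    · simp only [mul_assoc]; rw [cp1']
    · rw [hA1]; simp only [mul_assoc]
  tfae_have 5 → 1 := by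
    rintro ⟨hXAX, hXa5, h5⟩
    rw [hA1] at h5
    have h5' : star A * (A * X) = star A * (A * (w * (A * Adag))) := by
      simpa only [mul_assoc] using h5
    have hsds : ∀ Z : Matrix (Fin n) (Fin n) ℂ, star Adag * (star A * Z) = A * (Adag * Z) := by
      intro Z; rw [← mul_assoc, h4', mul_assoc]
    have h6 : A * X = A * (w * (A * Adag)) := by
      have h7 := congrArg (fun Z => star Adag * Z) h5'
      simp only [hsds, cp1] at h7
      exact h7
    calc X = X * A * X := hXAX.symm
      _ = w * A * X := by rw [hXa5]
      _ = w * (A * X) := by rw [mul_assoc]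
      _ = w * (A * (w * (A * Adag))) := by rw [h6]
      _ = w * (A * Adag) := cW _
      _ = w * A * Adag := (mul_assoc _ _ _).symm
  tfae_finish
end

section
/- Let A be an n×n complex matrix with k = Ind(A), let m be a positive integer, and let X be an n×n complex matrix. Write (P) for the pair of conditions: A X is idempotent with R(A X) = R(A^k) and N(A X) = N((A^k)^* A^{m+1} A^†), and X A is idempotent with R(X A) = R(A^k) and N(X A) = N((A^k)^* A^{m+1}). The following conditions are equivalent: (a) X = A^{w_m,†}; (b) (P) holds and rank(X) = rank(A^k); (c) (P) holds and A X² = X; (d) (P) holds and X A X = X. -/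
open Matrix

section helpers

variable {n k : ℕ} {A G Adag : Matrix (Fin n) (Fin n) ℂ}

private lemma mwgmp_ext {M N : Matrix (Fin n) (Fin n) ℂ}
    (h : ∀ v, M *ᵥ v = N *ᵥ v) : M = N := by
  ext i j
  have := congrFun (h (Pi.single j 1)) i
  simpa [Matrix.mulVec_single_one] using this

private lemma mwgmp_range_le {B C : Matrix (Fin n) (Fin n) ℂ}
    (h : B = A * C) :
    LinearMap.range B.mulVecLin ≤ LinearMap.range A.mulVecLin := by
  rw [h, Matrix.mulVecLin_mul]
  exact LinearMap.range_comp_le_range _ _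

private lemma mwgmp_ker_le {B C : Matrix (Fin n) (Fin n) ℂ}
    (h : B = C * A) :
    LinearMap.ker A.mulVecLin ≤ LinearMap.ker B.mulVecLin := by
  rw [h, Matrix.mulVecLin_mul]
  exact LinearMap.ker_le_ker_comp _ _

private lemma mwgmp_proj {P Q : Matrix (Fin n) (Fin n) ℂ}
    (hP : P * P = P) (hQ : Q * Q = Q)
    (hr : LinearMap.range P.mulVecLin = LinearMap.range Q.mulVecLin)
    (hk : LinearMap.ker P.mulVecLin = LinearMap.ker Q.mulVecLin) : P = Q := by
  apply mwgmp_ext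
  intro v
  have h1 : Q *ᵥ (v - P *ᵥ v) = 0 := by
    have hmem : (v - P *ᵥ v) ∈ LinearMap.ker P.mulVecLin := by
      simp only [LinearMap.mem_ker, Matrix.mulVecLin_apply, Matrix.mulVec_sub,
        Matrix.mulVec_mulVec, hP, sub_self]
    rw [hk] at hmem
    simpa using hmem
  have h2 : Q *ᵥ (P *ᵥ v) = P *ᵥ v := by
    have hmem : P *ᵥ v ∈ LinearMap.range Q.mulVecLin := by
      rw [← hr]; exact ⟨v, rfl⟩
    obtain ⟨w, hw⟩ := hmem
    simp only [Matrix.mulVecLin_apply] at hw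
    rw [← hw, Matrix.mulVec_mulVec, hQ]
  have := congrArg (Q *ᵥ ·) (sub_add_cancel v (P *ᵥ v)).symm
  simp only [Matrix.mulVec_add, h1, zero_add, h2] at this
  exact this.symm

end helpers

section alg
variable {n k : ℕ} {A G Adag : Matrix (Fin n) (Fin n) ℂ}

private lemma mwgmp_eA (h2 : A * G ^ 2 = G) : ∀ j, A * G ^ (j + 2) = G ^ (j + 1)
  | 0 => by simpa using h2
  | j + 1 => by
    show A * G ^ ((j + 2) + 1) = G ^ ((j + 1) + 1)
    rw [pow_succ, ← mul_assoc, mwgmp_eA h2 j, ← pow_succ]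

private lemma mwgmp_eB (h2 : A * G ^ 2 = G) : ∀ j, A ^ j * G ^ (j + 1) = G
  | 0 => by simp
  | j + 1 => by
    show A ^ (j + 1) * G ^ ((j + 1) + 1) = G
    rw [pow_succ A j, mul_assoc, show (j+1)+1 = j+2 from rfl, mwgmp_eA h2 j,
      mwgmp_eB h2 j]

private lemma mwgmp_eC (h1 : G * A ^ (k + 1) = A ^ k) (h2 : A * G ^ 2 = G) :
    G * A * G = G := by
  have key : G * A * (A ^ k * G ^ (k + 1)) = G := by
    rw [← mul_assoc, mul_assoc G A, ← pow_succ', mul_assoc, ← mul_assoc,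
      h1, mwgmp_eB h2 k]
  rw [mwgmp_eB h2 k] at key
  exact key

private lemma mwgmp_eC' (h1 : G * A ^ (k + 1) = A ^ k) (h2 : A * G ^ 2 = G)
    (j : ℕ) : G ^ (j + 1) * A * G = G ^ (j + 1) := by
  rw [pow_succ, mul_assoc, mul_assoc, ← mul_assoc G A, mwgmp_eC h1 h2]

private lemma mwgmp_eD (h2 : A * G ^ 2 = G) :
    ∀ j, A ^ (j + 1) * G ^ (j + 1) = A * G
  | 0 => by simp
  | j + 1 => by
    show A ^ ((j + 1) + 1) * G ^ ((j + 1) + 1) = A * G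
    rw [pow_succ A (j+1), mul_assoc, show (j+1)+1 = j+2 from rfl,
      mwgmp_eA h2 j, mwgmp_eD h2 j]

private lemma mwgmp_eE (h1 : G * A ^ (k + 1) = A ^ k) :
    ∀ j, G ^ (j + 1) * A ^ (k + 1 + j) = A ^ k
  | 0 => by simpa using h1
  | j + 1 => by
    rw [pow_succ G (j+1), pow_add A (k+1) (j+1), mul_assoc (G ^ (j+1)) G,
      ← mul_assoc G (A ^ (k+1)), h1, ← pow_add,
      show k+(j+1) = k+1+j by omega]
    exact mwgmp_eE h1 j

private lemma mwgmp_eF (h1 : G * A ^ (k + 1) = A ^ k) (h2 : A * G ^ 2 = G) :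
    A * G * A ^ k = A ^ k := by
  conv_lhs => rw [← h1]
  rw [← mul_assoc, mul_assoc A G G, ← pow_two, h2, h1]

private lemma mwgmp_eG (h2 : A * G ^ 2 = G) (hd1 : A * Adag * A = A) :
    A * Adag * G = G := by
  conv_lhs => rw [← h2]
  rw [← mul_assoc, hd1, h2]

private lemma mwgmp_eH (h1 : G * A ^ (k + 1) = A ^ k) (h2 : A * G ^ 2 = G) :
    (A * G) * (A * G) = A * G := by
  rw [mul_assoc, ← mul_assoc G A G, mwgmp_eC h1 h2]

private lemma mwgmp_eK (h1 : G * A ^ (k + 1) = A ^ k) (h2 : A * G ^ 2 = G)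
    (D : Matrix (Fin n) (Fin n) ℂ) (hD1 : A * G * D = D) (hD2 : A * D = 0) :
    D = 0 := by
  have hk1 : G * A ^ (k + 2) = A ^ (k + 1) := by
    rw [show k+2 = (k+1)+1 from rfl, pow_succ, ← mul_assoc, h1, ← pow_succ]
  have step : A ^ (k + 2) * G ^ (k + 1) = A * (A * G) := by
    rw [show k+2 = (k+1)+1 from rfl, pow_succ' A (k+1), mul_assoc,
      mwgmp_eD h2 k]
  calc D = A * G * D := hD1.symm
    _ = A ^ (k + 1) * G ^ (k + 1) * D := by rw [mwgmp_eD h2 k]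
    _ = G * A ^ (k + 2) * G ^ (k + 1) * D := by rw [hk1]
    _ = G * (A * (A * G * D)) := by
        rw [mul_assoc G, mul_assoc G, step, mul_assoc A (A*G) D, mul_assoc]
    _ = G * (A * D) := by rw [hD1]
    _ = 0 := by rw [hD2, mul_zero]

end alg

section mwgmp_pre
variable {n : ℕ}
private lemma mwgmp_pre2 {P Q R : Matrix (Fin n) (Fin n) ℂ} (h : P * Q = R)
    (Y : Matrix (Fin n) (Fin n) ℂ) : Y * P * Q = Y * R := by
  rw [mul_assoc, h]

private lemma mwgmp_pre3 {P Q S R : Matrix (Fin n) (Fin n) ℂ} (h : P * Q * S = R)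
    (Y : Matrix (Fin n) (Fin n) ℂ) : Y * P * Q * S = Y * R := by
  rw [mul_assoc Y P Q, mul_assoc Y (P * Q) S, h]
end mwgmp_pre

/-- Characterizations of the `m`-WGMP inverse via the two projectors
`A X = P_{R(A^k), N((A^k)^* A^{m+1} A^†)}` and
`X A = P_{R(A^k), N((A^k)^* A^{m+1})}`. -/
theorem m_WGMP_inverse_characterizations_projectors {n k m : ℕ}
    (A AEP Adag X : Matrix (Fin n) (Fin n) ℂ)
    (hk : HasIndex A k) (hm : 0 < m)
    (hEP : IsCoreEP A k AEP)
    (hdag : IsMoorePenrose A Adag) :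
    [X = (AEP ^ (m + 1) * A ^ m) * A * Adag,
     ((A * X) * (A * X) = A * X ∧
        LinearMap.range (A * X).mulVecLin = LinearMap.range (A ^ k).mulVecLin ∧
        LinearMap.ker (A * X).mulVecLin
          = LinearMap.ker ((A ^ k)ᴴ * A ^ (m + 1) * Adag).mulVecLin ∧
      (X * A) * (X * A) = X * A ∧
        LinearMap.range (X * A).mulVecLin = LinearMap.range (A ^ k).mulVecLin ∧
        LinearMap.ker (X * A).mulVecLin
          = LinearMap.ker ((A ^ k)ᴴ * A ^ (m + 1)).mulVecLin) ∧
       X.rank = (A ^ k).rank,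
     ((A * X) * (A * X) = A * X ∧
        LinearMap.range (A * X).mulVecLin = LinearMap.range (A ^ k).mulVecLin ∧
        LinearMap.ker (A * X).mulVecLin
          = LinearMap.ker ((A ^ k)ᴴ * A ^ (m + 1) * Adag).mulVecLin ∧
      (X * A) * (X * A) = X * A ∧
        LinearMap.range (X * A).mulVecLin = LinearMap.range (A ^ k).mulVecLin ∧
        LinearMap.ker (X * A).mulVecLin
          = LinearMap.ker ((A ^ k)ᴴ * A ^ (m + 1)).mulVecLin) ∧
       A * X ^ 2 = X,
     ((A * X) * (A * X) = A * X ∧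
        LinearMap.range (A * X).mulVecLin = LinearMap.range (A ^ k).mulVecLin ∧
        LinearMap.ker (A * X).mulVecLin
          = LinearMap.ker ((A ^ k)ᴴ * A ^ (m + 1) * Adag).mulVecLin ∧
      (X * A) * (X * A) = X * A ∧
        LinearMap.range (X * A).mulVecLin = LinearMap.range (A ^ k).mulVecLin ∧
        LinearMap.ker (X * A).mulVecLin
          = LinearMap.ker ((A ^ k)ᴴ * A ^ (m + 1)).mulVecLin) ∧
       X * A * X = X].TFAE := by
  obtain ⟨m', rfl⟩ : ∃ m'', m = m'' + 1 := ⟨m - 1, (Nat.succ_pred_eq_of_pos hm).symm⟩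
  obtain ⟨h1, h2, h3⟩ := hEP
  obtain ⟨hd1, hd2, hd3, hd4⟩ := hdag
  set G := AEP with hGdef
  obtain ⟨X₀, hX₀⟩ : ∃ Y : Matrix (Fin n) (Fin n) ℂ,
      Y = G ^ (m' + 1 + 1) * A ^ (m' + 1 + 1) * Adag := ⟨_, rfl⟩
  -- basic consequences of the core-EP axioms
  have eA' : ∀ j, A * G ^ (j + 1 + 1) = G ^ (j + 1) := mwgmp_eA h2
  have eB := mwgmp_eB h2
  have eC := mwgmp_eC h1 h2
  have eC' := mwgmp_eC' h1 h2
  have eD : ∀ j, A ^ (j + 1) * G ^ (j + 1) = A * G := mwgmp_eD h2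
  have eE := mwgmp_eE h1
  have eF := mwgmp_eF h1 h2
  have eG := mwgmp_eG h2 hd1
  have eH := mwgmp_eH h1 h2
  have hform : G ^ (m' + 1 + 1) * A ^ (m' + 1) * A * Adag = X₀ := by
    rw [hX₀, mul_assoc (G ^ (m' + 1 + 1)) (A ^ (m' + 1)) A, ← pow_succ]
  have hA1 : A * X₀ = G ^ (m' + 1) * A ^ (m' + 1 + 1) * Adag := by
    rw [hX₀]; simp only [← mul_assoc]; rw [eA' m']
  have hAdA : A ^ (m' + 1 + 1) * Adag * A = A ^ (m' + 1 + 1) := by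
    conv_lhs => rw [pow_succ]
    rw [mwgmp_pre3 hd1, ← pow_succ]
  have hA2 : X₀ * A = G ^ (m' + 1 + 1) * A ^ (m' + 1 + 1) := by
    rw [hX₀]; rw [mwgmp_pre3 hAdA]
  have t1 : A ^ (m' + 1 + 1) * Adag * G = A ^ (m' + 1) * G := by
    conv_lhs => rw [pow_succ]
    rw [mwgmp_pre3 eG]
  have t2 : ∀ j, A ^ (m' + 1 + 1) * Adag * G ^ (j + 1)
      = A ^ (m' + 1) * G ^ (j + 1) := by
    intro j
    conv_lhs => rw [pow_succ' G j]
    rw [← mul_assoc, t1, mul_assoc, ← pow_succ']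
  have hP1 : (A * X₀) * (A * X₀) = A * X₀ := by
    rw [mul_assoc A X₀ (A * X₀), ← mul_assoc X₀ A X₀, hA2, hX₀]
    simp only [← mul_assoc]
    rw [eA' m']
    rw [mwgmp_pre2 (eD (m' + 1))]
    simp only [← mul_assoc]
    rw [eC' m']
  have hP2 : (X₀ * A) * (X₀ * A) = X₀ * A := by
    rw [hA2]
    simp only [← mul_assoc]
    rw [mwgmp_pre2 (eD (m' + 1))]
    simp only [← mul_assoc]
    rw [eC' (m' + 1)]
  have hC : A * X₀ ^ 2 = X₀ := by
    rw [pow_two, ← mul_assoc, hA1, hX₀]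
    simp only [← mul_assoc]
    rw [mwgmp_pre3 (t2 (m' + 1))]
    simp only [← mul_assoc]
    rw [mwgmp_pre2 (eB (m' + 1))]
    rw [← pow_succ]
  have hD : X₀ * A * X₀ = X₀ := by
    rw [hA2, hX₀]
    simp only [← mul_assoc]
    rw [mwgmp_pre2 (eD (m' + 1))]
    simp only [← mul_assoc]
    rw [eC' (m' + 1)]
  have split1 : G ^ (m' + 1) = A ^ k * G ^ (k + 1 + m') := by
    calc G ^ (m' + 1) = G * G ^ m' := pow_succ' G m'
      _ = (A ^ k * G ^ (k + 1)) * G ^ m' := by rw [eB k]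
      _ = A ^ k * G ^ (k + 1 + m') := by rw [mul_assoc, ← pow_add]
  have split2 : G ^ (m' + 1 + 1) = A ^ k * G ^ (k + 1 + (m' + 1)) := by
    calc G ^ (m' + 1 + 1) = G * G ^ (m' + 1) := pow_succ' G (m' + 1)
      _ = (A ^ k * G ^ (k + 1)) * G ^ (m' + 1) := by rw [eB k]
      _ = A ^ k * G ^ (k + 1 + (m' + 1)) := by rw [mul_assoc, ← pow_add]
  have f1 : A * X₀ = A ^ k * (G ^ (k + 1 + m') * A ^ (m' + 1 + 1) * Adag) := by
    rw [hA1, split1]; simp only [mul_assoc]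
  have q1 : G ^ (m' + 1) * A ^ (m' + 1 + 1 + k) = A ^ (k + 1) := by
    rw [show m' + 1 + 1 + k = k + 1 + m' + 1 by omega, pow_succ A (k + 1 + m'),
      ← mul_assoc, eE m', ← pow_succ]
  have q2 : G ^ (m' + 1 + 1) * A ^ (m' + 1 + 1 + k) = A ^ k := by
    rw [show m' + 1 + 1 + k = k + 1 + (m' + 1) by omega]
    exact eE (m' + 1)
  have pa : A ^ (m' + 1 + 1) * A ^ k = A ^ (m' + 1 + 1 + k) :=
    (pow_add A (m' + 1 + 1) k).symm
  have f2 : A ^ k = (A * X₀) * (A * A ^ k * (G ^ (k + 1) * A ^ k)) := by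
    symm
    rw [hA1]
    simp only [← mul_assoc]
    rw [mwgmp_pre3 hAdA, mwgmp_pre2 pa]
    rw [q1, eD k, eF]
  have f3 : X₀ * A = A ^ k * (G ^ (k + 1 + (m' + 1)) * A ^ (m' + 1 + 1)) := by
    rw [hA2, split2]; simp only [mul_assoc]
  have f4 : A ^ k = (X₀ * A) * A ^ k := by
    symm
    rw [hA2, mul_assoc, pa, q2]
  have hAGH : (G ^ (k + 1))ᴴ * Aᴴ * (A ^ k)ᴴ = A * G := by
    rw [← conjTranspose_mul, ← conjTranspose_mul, ← mul_assoc, ← pow_succ, eD k, h3]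
  have hkAG : (A ^ k)ᴴ * A * G = (A ^ k)ᴴ := by
    rw [mul_assoc, ← h3, ← conjTranspose_mul, eF]
  have f5 : A * X₀ = (G ^ (m' + 1) * ((G ^ (k + 1))ᴴ * Aᴴ))
      * ((A ^ k)ᴴ * A ^ (m' + 1 + 1) * Adag) := by
    symm
    simp only [← mul_assoc]
    rw [mwgmp_pre3 hAGH]
    simp only [← mul_assoc]
    rw [eC' m', hA1]
  have f6 : (A ^ k)ᴴ * A ^ (m' + 1 + 1) * Adag
      = ((A ^ k)ᴴ * A ^ (m' + 1)) * (A * X₀) := by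
    symm
    rw [hA1]
    simp only [← mul_assoc]
    rw [mwgmp_pre2 (eD m')]
    simp only [← mul_assoc]
    rw [hkAG]
  have f7 : X₀ * A = (G ^ (m' + 1 + 1) * ((G ^ (k + 1))ᴴ * Aᴴ))
      * ((A ^ k)ᴴ * A ^ (m' + 1 + 1)) := by
    symm
    simp only [← mul_assoc]
    rw [mwgmp_pre3 hAGH]
    simp only [← mul_assoc]
    rw [eC' (m' + 1), hA2]
  have f8 : (A ^ k)ᴴ * A ^ (m' + 1 + 1)
      = ((A ^ k)ᴴ * A ^ (m' + 1 + 1)) * (X₀ * A) := by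
    symm
    rw [hA2]
    simp only [← mul_assoc]
    rw [mwgmp_pre2 (eD (m' + 1))]
    simp only [← mul_assoc]
    rw [hkAG]
  have f9 : X₀ = A ^ k * (G ^ (k + 1 + (m' + 1)) * A ^ (m' + 1 + 1) * Adag) := by
    rw [hX₀, split2]; simp only [mul_assoc]
  have f10 : A ^ k = X₀ * (A * A ^ k) := by
    symm
    rw [hX₀]
    simp only [← mul_assoc]
    rw [mwgmp_pre3 hAdA, mwgmp_pre2 pa, q2]
  have g1 : G * (A * X₀) = X₀ := by
    rw [hA1, hX₀]
    simp only [← mul_assoc]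
    rw [← pow_succ']
  have hAGX₀ : A * G * X₀ = X₀ := by
    rw [hX₀]
    simp only [← mul_assoc]
    rw [mwgmp_pre2 (pow_succ' G (m' + 1 + 1)).symm, eA' (m' + 1)]
  have fAG : A * G = A ^ k * (A * G ^ (k + 1)) := by
    symm
    rw [← mul_assoc, ← pow_succ, eD k]
  have hrAX₀ : LinearMap.range (A * X₀).mulVecLin
      = LinearMap.range (A ^ k).mulVecLin :=
    le_antisymm (mwgmp_range_le f1) (mwgmp_range_le f2)
  have hkAX₀ : LinearMap.ker (A * X₀).mulVecLin
      = LinearMap.ker ((A ^ k)ᴴ * A ^ (m' + 1 + 1) * Adag).mulVecLin :=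
    le_antisymm (mwgmp_ker_le f6) (mwgmp_ker_le f5)
  have hrXA₀ : LinearMap.range (X₀ * A).mulVecLin
      = LinearMap.range (A ^ k).mulVecLin :=
    le_antisymm (mwgmp_range_le f3) (mwgmp_range_le f4)
  have hkXA₀ : LinearMap.ker (X₀ * A).mulVecLin
      = LinearMap.ker ((A ^ k)ᴴ * A ^ (m' + 1 + 1)).mulVecLin :=
    le_antisymm (mwgmp_ker_le f8) (mwgmp_ker_le f7)
  have hrk₀ : X₀.rank = (A ^ k).rank := by
    refine le_antisymm ?_ ?_
    · rw [f9]; exact Matrix.rank_mul_le_left _ _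
    · conv_lhs => rw [f10]
      exact Matrix.rank_mul_le_left _ _
  have main : ∀ X' : Matrix (Fin n) (Fin n) ℂ,
      (A * X') * (A * X') = A * X' →
      LinearMap.range (A * X').mulVecLin = LinearMap.range (A ^ k).mulVecLin →
      LinearMap.ker (A * X').mulVecLin
        = LinearMap.ker ((A ^ k)ᴴ * A ^ (m' + 1 + 1) * Adag).mulVecLin →
      (X' * A) * (X' * A) = X' * A →
      LinearMap.range (X' * A).mulVecLin = LinearMap.range (A ^ k).mulVecLin →
      LinearMap.ker (X' * A).mulVecLin
        = LinearMap.ker ((A ^ k)ᴴ * A ^ (m' + 1 + 1)).mulVecLin →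
      A * X' = A * X₀ ∧ X' * A = X₀ * A := by
    intro X' p1 r1 k1 p2 r2 k2
    exact ⟨mwgmp_proj p1 hP1 (r1.trans hrAX₀.symm) (k1.trans hkAX₀.symm),
      mwgmp_proj p2 hP2 (r2.trans hrXA₀.symm) (k2.trans hkXA₀.symm)⟩
  tfae_have 1 → 2 := by
    intro hX
    rw [hform] at hX
    subst hX
    exact ⟨⟨hP1, hrAX₀, hkAX₀, hP2, hrXA₀, hkXA₀⟩, hrk₀⟩
  tfae_have 1 → 3 := by
    intro hX
    rw [hform] at hX
    subst hX
    exact ⟨⟨hP1, hrAX₀, hkAX₀, hP2, hrXA₀, hkXA₀⟩, hC⟩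
  tfae_have 1 → 4 := by
    intro hX
    rw [hform] at hX
    subst hX
    exact ⟨⟨hP1, hrAX₀, hkAX₀, hP2, hrXA₀, hkXA₀⟩, hD⟩
  tfae_have 4 → 1 := by
    rintro ⟨⟨p1, r1, k1, p2, r2, k2⟩, hx⟩
    obtain ⟨e1, e2⟩ := main X p1 r1 k1 p2 r2 k2
    rw [hform]
    calc X = X * A * X := hx.symm
      _ = X₀ * A * X₀ := by rw [mul_assoc, e1, ← mul_assoc, e2]
      _ = X₀ := hD
  tfae_have 3 → 1 := by
    rintro ⟨⟨p1, r1, k1, p2, r2, k2⟩, hx⟩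
    obtain ⟨e1, e2⟩ := main X p1 r1 k1 p2 r2 k2
    rw [hform]
    have hXfix : (A * X₀) * X = X := by
      conv_rhs => rw [← hx]
      rw [pow_two, ← mul_assoc, e1]
    have hAGX : A * G * X = X := by
      conv_lhs => rw [← hXfix]
      rw [← mul_assoc (A * G) (A * X₀) X, mul_assoc A G (A * X₀), g1, hXfix]
    have hsub : X - X₀ = 0 := by
      refine mwgmp_eK h1 h2 (X - X₀) ?_ ?_
      · rw [mul_sub, hAGX, hAGX₀]
      · rw [mul_sub, e1, sub_self]
    exact sub_eq_zero.mp hsub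
  tfae_have 2 → 1 := by
    rintro ⟨⟨p1, r1, k1, p2, r2, k2⟩, hrk⟩
    obtain ⟨e1, e2⟩ := main X p1 r1 k1 p2 r2 k2
    rw [hform]
    have le1 : LinearMap.range (A ^ k).mulVecLin ≤ LinearMap.range X.mulVecLin := by
      rw [← r2]; exact mwgmp_range_le rfl
    have hrX : LinearMap.range X.mulVecLin = LinearMap.range (A ^ k).mulVecLin :=
      (Submodule.eq_of_le_of_finrank_eq le1 (hrk.symm : (A ^ k).rank = X.rank)).symm
    have hrAG : LinearMap.range (A * G).mulVecLin
        = LinearMap.range (A ^ k).mulVecLin :=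
      le_antisymm (mwgmp_range_le fAG) (mwgmp_range_le eF.symm)
    have hAGX : A * G * X = X := by
      apply mwgmp_ext
      intro v
      have hmem : X *ᵥ v ∈ LinearMap.range (A * G).mulVecLin := by
        rw [hrAG, ← hrX]; exact ⟨v, rfl⟩
      obtain ⟨w, hw⟩ := hmem
      simp only [Matrix.mulVecLin_apply] at hw
      calc (A * G * X) *ᵥ v = (A * G) *ᵥ (X *ᵥ v) := by rw [← Matrix.mulVec_mulVec]
        _ = (A * G) *ᵥ ((A * G) *ᵥ w) := by rw [hw]
        _ = (A * G * (A * G)) *ᵥ w := by rw [Matrix.mulVec_mulVec]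
        _ = (A * G) *ᵥ w := by rw [eH]
        _ = X *ᵥ v := hw
    have hsub : X - X₀ = 0 := by
      refine mwgmp_eK h1 h2 (X - X₀) ?_ ?_
      · rw [mul_sub, hAGX, hAGX₀]
      · rw [mul_sub, e1, sub_self]
    exact sub_eq_zero.mp hsub
  tfae_finish
end

section
/- Let A be an n×n complex matrix with k = Ind(A) and let m be a positive integer. Then A^{w_m,†} = (A^D)^{m+1} A^k (A^k)^† A^m A A^†, where A^k (A^k)^† is the orthogonal projector onto R(A^k) and A A^† is the orthogonal projector onto R(A). -/
open Matrix

/-- Representation `A^{w_m,†} = (A^D)^{m+1} P_{A^k} A^m P_A`. -/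
theorem m_WGMP_inverse_repr_Drazin {n k m : ℕ}
    (A AEP AD Adag Akdag : Matrix (Fin n) (Fin n) ℂ)
    (hk : HasIndex A k) (hm : 0 < m)
    (hEP : IsCoreEP A k AEP)
    (hD : IsDrazin A k AD)
    (hdag : IsMoorePenrose A Adag)
    (hkdag : IsMoorePenrose (A ^ k) Akdag) :
    (AEP ^ (m + 1) * A ^ m) * A * Adag
      = AD ^ (m + 1) * (A ^ k * Akdag) * A ^ m * (A * Adag) := by
  obtain ⟨h1, h2, h3⟩ := hEP
  obtain ⟨d1, d2, d3⟩ := hD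
  obtain ⟨p1, p2, p3, p4⟩ := hkdag
  have hc : Commute A AD := d2
  -- A * AEP^(j+2) = AEP^(j+1)
  have hXstep : ∀ j : ℕ, A * AEP ^ (j + 2) = AEP ^ (j + 1) := by
    intro j
    have e : AEP ^ (j + 2) = AEP ^ 2 * AEP ^ j := by
      rw [show j + 2 = 2 + j from Nat.add_comm j 2, pow_add]
    rw [e, ← mul_assoc, h2, ← pow_succ']
  have hX_pow : ∀ j : ℕ, A ^ j * AEP ^ (j + 1) = AEP := by
    intro j
    induction j with
    | zero => simp
    | succ j ih =>
      rw [pow_succ A j, mul_assoc, hXstep j, ih]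
  have hADsq : A * AD ^ 2 = AD := by
    rw [sq, ← mul_assoc, d2, d1]
  have hDstep : ∀ j : ℕ, A * AD ^ (j + 2) = AD ^ (j + 1) := by
    intro j
    have e : AD ^ (j + 2) = AD ^ 2 * AD ^ j := by
      rw [show j + 2 = 2 + j from Nat.add_comm j 2, pow_add]
    rw [e, ← mul_assoc, hADsq, ← pow_succ']
  have hAD_pow : ∀ j : ℕ, A ^ j * AD ^ (j + 1) = AD := by
    intro j
    induction j with
    | zero => simp
    | succ j ih =>
      rw [pow_succ A j, mul_assoc, hDstep j, ih]
  -- A^(k+1) * AD = A^k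
  have hA1D : A ^ (k + 1) * AD = A ^ k := by
    rw [(hc.pow_left (k + 1)).eq, d3]
  -- A * AEP = A^(k+1) * AEP^(k+1)
  have hAX : A * AEP = A ^ (k + 1) * AEP ^ (k + 1) := by
    conv_lhs => rw [← hX_pow k]
    rw [← mul_assoc, ← pow_succ']
  -- (A*AEP) * A^k = A^k
  have hAXAk : A * AEP * A ^ k = A ^ k := by
    conv_lhs => rw [← hA1D]
    rw [← mul_assoc, mul_assoc A AEP, h1, ← pow_succ', hA1D]
  -- (A*AEP) * Qk = Qk
  have hXQ : A * AEP * (A ^ k * Akdag) = A ^ k * Akdag := by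
    rw [← mul_assoc, hAXAk]
  -- Qk * (A*AEP) = A*AEP
  have hQk1 : A ^ k * Akdag * A ^ (k + 1) = A ^ (k + 1) := by
    rw [pow_succ A k, ← mul_assoc, p1]
  have hQX : A ^ k * Akdag * (A * AEP) = A * AEP := by
    rw [hAX, ← mul_assoc, hQk1]
  -- A*AEP = Qk
  have hQXQ : A ^ k * Akdag * (A * AEP) = A ^ k * Akdag := by
    have := congrArg conjTranspose hXQ
    rwa [conjTranspose_mul, p3, h3] at this
  have hAXQk : A * AEP = A ^ k * Akdag := by
    rw [← hQX, hQXQ]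
  -- AEP = AD * Qk
  have hXD : AEP = AD * (A ^ k * Akdag) := by
    rw [← hAXQk, hAX, ← mul_assoc, d3]
    exact (hX_pow k).symm
  -- Qk * AD = AD
  have hQD : A ^ k * Akdag * AD = AD := by
    conv_lhs => rw [← hAD_pow k]
    rw [← mul_assoc, p1, hAD_pow k]
  -- AEP^(j+1) = AD^(j+1) * Qk
  have hpow : ∀ j : ℕ, AEP ^ (j + 1) = AD ^ (j + 1) * (A ^ k * Akdag) := by
    intro j
    induction j with
    | zero => simpa using hXD
    | succ j ih =>
      rw [pow_succ AEP (j + 1), ih, pow_succ AD (j + 1), mul_assoc, hXD,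
        ← mul_assoc (A ^ k * Akdag), hQD, mul_assoc]
  rw [hpow m]
  simp only [mul_assoc]
end

section
/- Let A be an n×n complex matrix with k = Ind(A) and let m be a positive integer. Then A^{w_m,†} = (A^{m+1} A^k (A^k)^†)^† A^m A A^†, where A^k (A^k)^† is the orthogonal projector onto R(A^k) and A A^† is the orthogonal projector onto R(A). -/
open Matrix

/-- Uniqueness of the Moore–Penrose inverse. -/
private lemma mp_unique {p q : ℕ} (A : Matrix (Fin p) (Fin q) ℂ)
    (Y Z : Matrix (Fin q) (Fin p) ℂ)
    (hY : IsMoorePenrose A Y) (hZ : IsMoorePenrose A Z) : Y = Z := by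
  obtain ⟨hY1, hY2, hY3, hY4⟩ := hY
  obtain ⟨hZ1, hZ2, hZ3, hZ4⟩ := hZ
  have h5 : A * Y = A * Z := by
    calc A * Y = (A * Y)ᴴ := hY3.symm
      _ = ((A * Z * A) * Y)ᴴ := by rw [hZ1]
      _ = ((A * Z) * (A * Y))ᴴ := by simp only [Matrix.mul_assoc]
      _ = (A * Y)ᴴ * (A * Z)ᴴ := by rw [conjTranspose_mul]
      _ = (A * Y) * (A * Z) := by rw [hY3, hZ3]
      _ = (A * Y * A) * Z := by simp only [Matrix.mul_assoc]
      _ = A * Z := by rw [hY1]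
  have h6 : Y * A = Z * A := by
    calc Y * A = (Y * A)ᴴ := hY4.symm
      _ = (Y * (A * Z * A))ᴴ := by rw [hZ1]
      _ = ((Y * A) * (Z * A))ᴴ := by simp only [Matrix.mul_assoc]
      _ = (Z * A)ᴴ * (Y * A)ᴴ := by rw [conjTranspose_mul]
      _ = (Z * A) * (Y * A) := by rw [hY4, hZ4]
      _ = Z * (A * Y * A) := by simp only [Matrix.mul_assoc]
      _ = Z * A := by rw [hY1]
  calc Y = Y * A * Y := hY2.symm
    _ = Y * (A * Z) := by rw [Matrix.mul_assoc, h5]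
    _ = (Y * A) * Z := by rw [Matrix.mul_assoc]
    _ = Z * A * Z := by rw [h6]
    _ = Z := hZ2

/-- Representation `A^{w_m,†} = (A^{m+1} P_{A^k})^† A^m P_A`. -/
theorem m_WGMP_inverse_repr_MP {n k m : ℕ}
    (A AEP Adag Akdag W : Matrix (Fin n) (Fin n) ℂ)
    (hk : HasIndex A k) (hm : 0 < m)
    (hEP : IsCoreEP A k AEP)
    (hdag : IsMoorePenrose A Adag)
    (hkdag : IsMoorePenrose (A ^ k) Akdag)
    (hW : IsMoorePenrose (A ^ (m + 1) * (A ^ k * Akdag)) W) :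
    (AEP ^ (m + 1) * A ^ m) * A * Adag = W * A ^ m * (A * Adag) := by
  obtain ⟨h1, h2, h3⟩ := hEP
  obtain ⟨hq1, -, hq3, -⟩ := hkdag
  -- helper forms of the hypotheses
  have h2' : ∀ Y : Matrix (Fin n) (Fin n) ℂ, A * (AEP * (AEP * Y)) = AEP * Y := by
    intro Y
    conv_rhs => rw [← h2]
    simp only [pow_two, mul_assoc]
  have h1' : ∀ Y : Matrix (Fin n) (Fin n) ℂ,
      AEP * (A ^ (k + 1) * Y) = A ^ k * Y := by
    intro Y
    rw [← mul_assoc, h1]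
  have hq1' : ∀ Y : Matrix (Fin n) (Fin n) ℂ,
      (A ^ k * Akdag) * (A ^ k * Y) = A ^ k * Y := by
    intro Y
    calc (A ^ k * Akdag) * (A ^ k * Y) = (A ^ k * Akdag * A ^ k) * Y := by
          simp only [mul_assoc]
      _ = A ^ k * Y := by rw [hq1]
  -- L2 : A^j * AEP^(j+1) = AEP
  have L2 : ∀ j : ℕ, A ^ j * AEP ^ (j + 1) = AEP := by
    intro j
    induction j with
    | zero => simp
    | succ j ih =>
      calc A ^ (j + 1) * AEP ^ (j + 1 + 1)
          = A ^ j * (A * (AEP * (AEP * AEP ^ j))) := by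
            rw [pow_succ A j, pow_succ' AEP (j + 1), pow_succ' AEP j]
            simp only [mul_assoc]
        _ = A ^ j * (AEP * AEP ^ j) := by rw [h2']
        _ = A ^ j * AEP ^ (j + 1) := by rw [pow_succ' AEP j]
        _ = AEP := ih
  -- L1 : A^(j+1) * AEP^(j+1) = A * AEP
  have L1 : ∀ j : ℕ, A ^ (j + 1) * AEP ^ (j + 1) = A * AEP := by
    intro j
    induction j with
    | zero => simp
    | succ j ih =>
      calc A ^ (j + 1 + 1) * AEP ^ (j + 1 + 1)
          = A ^ (j + 1) * (A * (AEP * (AEP * AEP ^ j))) := by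
            rw [pow_succ A (j + 1), pow_succ' AEP (j + 1), pow_succ' AEP j]
            simp only [mul_assoc]
        _ = A ^ (j + 1) * (AEP * AEP ^ j) := by rw [h2']
        _ = A ^ (j + 1) * AEP ^ (j + 1) := by rw [pow_succ' AEP j]
        _ = A * AEP := ih
  -- L3 : AEP^(i+1) * A^(k+i+1) = A^k
  have L3 : ∀ i : ℕ, AEP ^ (i + 1) * A ^ (k + i + 1) = A ^ k := by
    intro i
    induction i with
    | zero => simpa using h1
    | succ i ih =>
      calc AEP ^ (i + 1 + 1) * A ^ (k + (i + 1) + 1)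
          = AEP ^ (i + 1) * (AEP * (A ^ (k + 1) * A ^ (i + 1))) := by
            rw [pow_succ AEP (i + 1), show k + (i + 1) + 1 = (k + 1) + (i + 1) by omega,
              pow_add A (k + 1) (i + 1)]
            simp only [mul_assoc]
        _ = AEP ^ (i + 1) * (A ^ k * A ^ (i + 1)) := by rw [h1']
        _ = AEP ^ (i + 1) * A ^ (k + i + 1) := by
            rw [← pow_add A k (i + 1), show k + (i + 1) = k + i + 1 by omega]
        _ = A ^ k := ih
  -- hAX : (A * AEP) * A^(k+1+i) = A^(k+1+i)
  have hAX : ∀ i : ℕ, (A * AEP) * A ^ (k + 1 + i) = A ^ (k + 1 + i) := by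
    intro i
    induction i with
    | zero =>
      calc (A * AEP) * A ^ (k + 1 + 0) = A * (AEP * A ^ (k + 1)) := by
            rw [Nat.add_zero]; simp only [mul_assoc]
        _ = A * A ^ k := by rw [h1]
        _ = A ^ (k + 1 + 0) := by rw [Nat.add_zero, ← pow_succ' A k]
    | succ i ih =>
      calc (A * AEP) * A ^ (k + 1 + (i + 1))
          = ((A * AEP) * A ^ (k + 1 + i)) * A := by
            rw [show k + 1 + (i + 1) = (k + 1 + i) + 1 by omega, pow_succ A (k + 1 + i),
              ← mul_assoc]
        _ = A ^ (k + 1 + i) * A := by rw [ih]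
        _ = A ^ (k + 1 + (i + 1)) := by
            rw [← pow_succ A (k + 1 + i), show k + 1 + (i + 1) = (k + 1 + i) + 1 by omega]
  -- key products
  have hQX : (A ^ k * Akdag) * AEP = AEP := by
    calc (A ^ k * Akdag) * AEP = (A ^ k * Akdag) * (A ^ k * AEP ^ (k + 1)) := by rw [L2 k]
      _ = A ^ k * AEP ^ (k + 1) := hq1' _
      _ = AEP := L2 k
  have hQXm : (A ^ k * Akdag) * AEP ^ (m + 1) = AEP ^ (m + 1) := by
    calc (A ^ k * Akdag) * AEP ^ (m + 1)
        = ((A ^ k * Akdag) * AEP) * AEP ^ m := by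
          rw [pow_succ' AEP m]; simp only [mul_assoc]
      _ = AEP * AEP ^ m := by rw [hQX]
      _ = AEP ^ (m + 1) := by rw [← pow_succ' AEP m]
  have hXB : AEP ^ (m + 1) * (A ^ (m + 1) * (A ^ k * Akdag)) = A ^ k * Akdag := by
    calc AEP ^ (m + 1) * (A ^ (m + 1) * (A ^ k * Akdag))
        = (AEP ^ (m + 1) * A ^ (k + m + 1)) * Akdag := by
          rw [show k + m + 1 = (m + 1) + k by omega, pow_add A (m + 1) k]
          simp only [mul_assoc]
      _ = A ^ k * Akdag := by rw [L3 m]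
  have hBX : (A ^ (m + 1) * (A ^ k * Akdag)) * AEP ^ (m + 1) = A * AEP := by
    calc (A ^ (m + 1) * (A ^ k * Akdag)) * AEP ^ (m + 1)
        = A ^ (m + 1) * ((A ^ k * Akdag) * AEP ^ (m + 1)) := by simp only [mul_assoc]
      _ = A ^ (m + 1) * AEP ^ (m + 1) := by rw [hQXm]
      _ = A * AEP := L1 m
  have hPB : (A * AEP) * (A ^ (m + 1) * (A ^ k * Akdag)) = A ^ (m + 1) * (A ^ k * Akdag) := by
    calc (A * AEP) * (A ^ (m + 1) * (A ^ k * Akdag))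
        = ((A * AEP) * A ^ (k + 1 + m)) * Akdag := by
          rw [show k + 1 + m = (m + 1) + k by omega, pow_add A (m + 1) k]
          simp only [mul_assoc]
      _ = A ^ (k + 1 + m) * Akdag := by rw [hAX m]
      _ = A ^ (m + 1) * (A ^ k * Akdag) := by
          rw [show k + 1 + m = (m + 1) + k by omega, pow_add A (m + 1) k]
          simp only [mul_assoc]
  -- AEP^(m+1) satisfies the four Moore–Penrose equations for B
  have hMP : IsMoorePenrose (A ^ (m + 1) * (A ^ k * Akdag)) (AEP ^ (m + 1)) := by
    refine ⟨?_, ?_, ?_, ?_⟩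
    · rw [hBX, hPB]
    · rw [hXB, hQXm]
    · rw [hBX, h3]
    · rw [hXB, hq3]
  have hWX : W = AEP ^ (m + 1) := mp_unique _ W (AEP ^ (m + 1)) hW hMP
  rw [hWX]
  simp only [mul_assoc]
end

section
/- Let A be an n×n complex matrix with k = Ind(A), let m be a positive integer, and let D be a q×n complex matrix with N((A^k)^* A^{m+1}) ⊆ N(D). Then X = D A^{w_m,†} is the unique q×n complex matrix satisfying X A = D and N((A^k)^* A^{m+1} A^†) ⊆ N(X). -/
open Matrix

/-- If the kernel of `M` is contained in the kernel of `N`, then `N` factors as `U * M`. -/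
lemma exists_left_factor {p q r : ℕ} (M : Matrix (Fin p) (Fin r) ℂ)
    (N : Matrix (Fin q) (Fin r) ℂ)
    (h : LinearMap.ker M.mulVecLin ≤ LinearMap.ker N.mulVecLin) :
    ∃ U : Matrix (Fin q) (Fin p) ℂ, N = U * M := by
  set f := M.mulVecLin
  set g := N.mulVecLin
  have hlift : LinearMap.ker f ≤ LinearMap.ker g := h
  let g₀ : ((Fin r → ℂ) ⧸ LinearMap.ker f) →ₗ[ℂ] (Fin q → ℂ) :=
    (LinearMap.ker f).liftQ g hlift
  obtain ⟨h', hh'⟩ := LinearMap.exists_extend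
    (g₀ ∘ₗ (f.quotKerEquivRange.symm : LinearMap.range f →ₗ[ℂ] _))
  refine ⟨LinearMap.toMatrix' h', ?_⟩
  have hcomp : h' ∘ₗ f = g := by
    apply LinearMap.ext
    intro v
    have hmem : f v ∈ LinearMap.range f := ⟨v, rfl⟩
    have h1 : h' (f v) = (g₀ ∘ₗ (f.quotKerEquivRange.symm :
        LinearMap.range f →ₗ[ℂ] _)) ⟨f v, hmem⟩ := by
      rw [← hh']; rfl
    have h2 : f.quotKerEquivRange.symm ⟨f v, hmem⟩ = Submodule.Quotient.mk v := by
      apply f.quotKerEquivRange.injective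
      simp [LinearMap.quotKerEquivRange_apply_mk]
    simp only [LinearMap.comp_apply]
    rw [h1]
    simp only [LinearMap.coe_comp, Function.comp_apply, LinearEquiv.coe_coe, h2]
    rfl
  have : N = LinearMap.toMatrix' (h' ∘ₗ f) := by
    rw [hcomp]
    show N = LinearMap.toMatrix' N.mulVecLin
    rw [← Matrix.toLin'_apply', LinearMap.toMatrix'_toLin']
  rw [this, LinearMap.toMatrix'_comp]
  congr 1
  show LinearMap.toMatrix' M.mulVecLin = M
  rw [← Matrix.toLin'_apply', LinearMap.toMatrix'_toLin']

/-- If the range of `N` is contained in the range of `M`, then `N` factors as `M * B`. -/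
lemma exists_right_factor {p q r : ℕ} (M : Matrix (Fin p) (Fin r) ℂ)
    (N : Matrix (Fin p) (Fin q) ℂ)
    (h : LinearMap.range N.mulVecLin ≤ LinearMap.range M.mulVecLin) :
    ∃ B : Matrix (Fin r) (Fin q) ℂ, N = M * B := by
  have hcol : ∀ j : Fin q, ∃ b : Fin r → ℂ, M *ᵥ b = N *ᵥ (Pi.single j 1) := by
    intro j
    have : N *ᵥ (Pi.single j 1) ∈ LinearMap.range N.mulVecLin := ⟨_, rfl⟩
    exact h this
  choose b hb using hcol
  refine ⟨Matrix.of (fun i j => b j i), ?_⟩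
  ext i j
  have := congrFun (hb j) i
  simp only [mulVec, dotProduct, Pi.single_apply, mul_ite, mul_one, mul_zero,
    Finset.sum_ite_eq', Finset.mem_univ, if_true] at this
  rw [← this]
  simp [Matrix.mul_apply, mulVec, dotProduct, mul_comm]

/-- `X = D A^{w_m,†}` is the unique solution of the restricted matrix equation
`X A = D`, `N((A^k)^* A^{m+1} A^†) ⊆ N(X)`. -/
theorem m_WGMP_inverse_restricted_equation {n k m q : ℕ}
    (A AEP Adag : Matrix (Fin n) (Fin n) ℂ)
    (D : Matrix (Fin q) (Fin n) ℂ)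
    (hk : HasIndex A k) (hm : 0 < m)
    (hEP : IsCoreEP A k AEP)
    (hdag : IsMoorePenrose A Adag)
    (hD : LinearMap.ker ((A ^ k)ᴴ * A ^ (m + 1)).mulVecLin
        ≤ LinearMap.ker D.mulVecLin) :
    (D * ((AEP ^ (m + 1) * A ^ m) * A * Adag)) * A = D ∧
    LinearMap.ker ((A ^ k)ᴴ * A ^ (m + 1) * Adag).mulVecLin
      ≤ LinearMap.ker (D * ((AEP ^ (m + 1) * A ^ m) * A * Adag)).mulVecLin ∧
    ∀ X : Matrix (Fin q) (Fin n) ℂ,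
      X * A = D →
      LinearMap.ker ((A ^ k)ᴴ * A ^ (m + 1) * Adag).mulVecLin
        ≤ LinearMap.ker X.mulVecLin →
      X = D * ((AEP ^ (m + 1) * A ^ m) * A * Adag) := by
  obtain ⟨e1, e2, e3⟩ := hEP
  obtain ⟨d1, d2, d3, d4⟩ := hdag
  -- A^k factors through A^(k+1)
  obtain ⟨B, hB⟩ : ∃ B, A ^ k = A ^ (k + 1) * B := by
    apply exists_right_factor
    have hle : LinearMap.range (A ^ (k + 1)).mulVecLin
        ≤ LinearMap.range (A ^ k).mulVecLin := by
      rw [show A ^ (k + 1) = A ^ k * A from pow_succ A k, Matrix.mulVecLin_mul]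
      exact LinearMap.range_comp_le_range _ _
    have heq : LinearMap.range (A ^ (k + 1)).mulVecLin
        = LinearMap.range (A ^ k).mulVecLin :=
      Submodule.eq_of_le_of_finrank_eq hle hk.1
    exact le_of_eq heq.symm
  have P1 : A * AEP * A ^ k = A ^ k := by
    conv_lhs => rw [hB]
    calc A * AEP * (A ^ (k + 1) * B)
        = (A * (AEP * A ^ (k + 1))) * B := by simp only [Matrix.mul_assoc]
      _ = (A * A ^ k) * B := by rw [e1]
      _ = A ^ (k + 1) * B := by rw [← pow_succ']
      _ = A ^ k := hB.symm
  have P2 : (A ^ k)ᴴ * (A * AEP) = (A ^ k)ᴴ := by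
    calc (A ^ k)ᴴ * (A * AEP) = (A ^ k)ᴴ * (A * AEP)ᴴ := by rw [e3]
      _ = (A * AEP * A ^ k)ᴴ := (conjTranspose_mul _ _).symm
      _ = (A ^ k)ᴴ := by rw [P1]
  have P3 : ∀ j : ℕ, A ^ (j + 1) * AEP ^ (j + 1) = A * AEP := by
    intro j
    induction j with
    | zero => simp [pow_one]
    | succ i ih =>
      have h2 : AEP ^ (i + 1 + 1) = AEP ^ 2 * AEP ^ i := by
        rw [← pow_add]; congr 1; omega
      calc A ^ (i + 1 + 1) * AEP ^ (i + 1 + 1)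
          = (A ^ (i + 1) * (A * AEP ^ 2)) * AEP ^ i := by
            rw [pow_succ A (i + 1), h2]; simp only [Matrix.mul_assoc]
        _ = (A ^ (i + 1) * AEP) * AEP ^ i := by rw [e2]
        _ = A ^ (i + 1) * AEP ^ (i + 1) := by rw [mul_assoc, ← pow_succ']
        _ = A * AEP := ih
  have KI : (A ^ k)ᴴ * (A ^ (m + 1) * AEP ^ (m + 1)) = (A ^ k)ᴴ := by
    rw [P3 m]; exact P2
  obtain ⟨U, hU⟩ := exists_left_factor ((A ^ k)ᴴ * A ^ (m + 1)) D hD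
  have hX0 : D * ((AEP ^ (m + 1) * A ^ m) * A * Adag)
      = U * ((A ^ k)ᴴ * A ^ (m + 1) * Adag) := by
    calc D * ((AEP ^ (m + 1) * A ^ m) * A * Adag)
        = U * (((A ^ k)ᴴ * (A ^ (m + 1) * AEP ^ (m + 1))) * ((A ^ m * A) * Adag)) := by
          rw [hU]; simp only [Matrix.mul_assoc]
      _ = U * ((A ^ k)ᴴ * (A ^ (m + 1) * Adag)) := by rw [KI, ← pow_succ]
      _ = U * ((A ^ k)ᴴ * A ^ (m + 1) * Adag) := by simp only [Matrix.mul_assoc]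
  refine ⟨?_, ?_, ?_⟩
  · calc (D * ((AEP ^ (m + 1) * A ^ m) * A * Adag)) * A
        = D * (AEP ^ (m + 1) * (A ^ m * (A * Adag * A))) := by simp only [Matrix.mul_assoc]
      _ = D * (AEP ^ (m + 1) * (A ^ m * A)) := by rw [d1]
      _ = D * (AEP ^ (m + 1) * A ^ (m + 1)) := by rw [← pow_succ]
      _ = (U * ((A ^ k)ᴴ * A ^ (m + 1))) * (AEP ^ (m + 1) * A ^ (m + 1)) := by rw [hU]
      _ = U * (((A ^ k)ᴴ * (A ^ (m + 1) * AEP ^ (m + 1))) * A ^ (m + 1)) := by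
          simp only [Matrix.mul_assoc]
      _ = U * ((A ^ k)ᴴ * A ^ (m + 1)) := by rw [KI]
      _ = D := hU.symm
  · intro v hv
    rw [LinearMap.mem_ker] at hv ⊢
    rw [hX0, Matrix.mulVecLin_mul, LinearMap.comp_apply, hv, map_zero]
  · intro X hXA hker
    obtain ⟨V, hV⟩ := exists_left_factor ((A ^ k)ᴴ * A ^ (m + 1) * Adag) X hker
    have key : D * ((AEP ^ (m + 1) * A ^ m) * A * Adag) = X := by
      calc D * ((AEP ^ (m + 1) * A ^ m) * A * Adag)
          = (X * A) * ((AEP ^ (m + 1) * A ^ m) * A * Adag) := by rw [hXA]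
        _ = (V * ((A ^ k)ᴴ * A ^ (m + 1) * Adag)) * A
              * ((AEP ^ (m + 1) * A ^ m) * A * Adag) := by rw [hV]
        _ = V * ((A ^ k)ᴴ * ((A ^ m * (A * Adag * A))
              * (AEP ^ (m + 1) * ((A ^ m * A) * Adag)))) := by
            rw [pow_succ A m]; simp only [Matrix.mul_assoc]
        _ = V * ((A ^ k)ᴴ * ((A ^ m * A) * (AEP ^ (m + 1) * ((A ^ m * A) * Adag)))) := by
            rw [d1]
        _ = V * (((A ^ k)ᴴ * (A ^ (m + 1) * AEP ^ (m + 1))) * (A ^ (m + 1) * Adag)) := by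
            rw [← pow_succ]; simp only [Matrix.mul_assoc]
        _ = V * ((A ^ k)ᴴ * (A ^ (m + 1) * Adag)) := by rw [KI]
        _ = V * ((A ^ k)ᴴ * A ^ (m + 1) * Adag) := by simp only [Matrix.mul_assoc]
        _ = X := hV.symm
    exact key.symm
end

section
/- Let A be an n×n complex matrix with k = Ind(A) and rank(A^k) = t, let m be a positive integer, let B be an n×(n−t) complex matrix of full column rank with R(B) = N((A^k)^* A^{m+1} A^†), and let C be an (n−t)×n complex matrix of full row rank with N(C) = R(A^k). Then the (2n−t)×(2n−t) block matrix K = [[A, B], [C, 0]] is invertible and K⁻¹ = [[A^{w_m,†}, (I_n − A^{w_m,†} A) C^†], [B^† (I_n − A A^{w_m,†}), B^† (A A^{w_m,†} A − A) C^†]]. -/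
open Matrix

/-!
It suffices to check `K * X = 1` for the proposed block matrix `X`. Writing `W = A^{w_m,†}`,
the four block identities reduce to three facts:
* `B B^†` fixes `1 - A W`: the columns of `1 - A W` lie in `N((A^k)^* A^{m+1} A^†) = R(B)`,
  because `(A^k)^* A A^⊕ = (A^k)^*` (`A A^⊕` is the orthogonal projector onto `R(A^k)`);
* `C W = 0`: `(A^⊕)^{m+1} = A^k (A^⊕)^{k+1} (A^⊕)^m` and `C` kills `R(A^k)`;
* `C C^† = 1`, since `C` has full row rank.
-/

section Monoid

variable {M : Type*} [Monoid M] {a x : M}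

theorem pow_mul_pow_succ_of_mul_sq (h : a * x ^ 2 = x) (j : ℕ) : a ^ j * x ^ (j + 1) = x := by
  induction j with
  | zero => simp
  | succ j ih =>
    calc a ^ (j + 1) * x ^ (j + 1 + 1) = a ^ j * (a * x ^ 2) * x ^ j := by
          rw [pow_succ a, show j + 1 + 1 = 2 + j by omega, pow_add]; simp only [mul_assoc]
      _ = x := by rw [h, mul_assoc, ← pow_succ', ih]

theorem pow_succ_mul_pow_succ_of_mul_sq (h : a * x ^ 2 = x) (j : ℕ) :
    a ^ (j + 1) * x ^ (j + 1) = a * x := by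
  rw [pow_succ', mul_assoc, pow_mul_pow_succ_of_mul_sq h]

end Monoid

namespace Matrix

variable {K : Type*} [Field K] {l o p : Type*} [Fintype o] [Fintype p]

theorem mul_eq_zero_iff_range_le_ker {M : Matrix l o K} {L : Matrix o p K} :
    M * L = 0 ↔ LinearMap.range L.mulVecLin ≤ LinearMap.ker M.mulVecLin := by
  classical
  rw [LinearMap.range_le_ker_iff, ← mulVecLin_mul, ← toLin'_apply', LinearEquiv.map_eq_zero_iff]

theorem mul_pow_eq_zero_of_mul_pow_succ_eq_zero [DecidableEq o] {A : Matrix o o K} {k : ℕ}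
    (hk : (A ^ (k + 1)).rank = (A ^ k).rank) {M : Matrix l o K} (h : M * A ^ (k + 1) = 0) :
    M * A ^ k = 0 := by
  have hle : LinearMap.range (A ^ (k + 1)).mulVecLin ≤ LinearMap.range (A ^ k).mulVecLin := by
    rw [pow_succ, mulVecLin_mul]
    exact LinearMap.range_comp_le_range _ _
  rw [mul_eq_zero_iff_range_le_ker, ← Submodule.eq_of_le_of_finrank_le hle hk.ge]
  exact mul_eq_zero_iff_range_le_ker.mp h

end Matrix

theorem Matrix.fromBlocks_mul_fromBlocks_eq_one {R : Type*} [Ring R] {l o : Type*} [Fintype l]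
    [Fintype o] [DecidableEq l] [DecidableEq o] {A W : Matrix l l R} {B : Matrix l o R}
    {C : Matrix o l R} {B' : Matrix o l R} {C' : Matrix l o R}
    (hB : B * B' * (1 - A * W) = 1 - A * W) (hCW : C * W = 0) (hC : C * C' = 1) :
    fromBlocks A B C 0 *
        fromBlocks W ((1 - W * A) * C') (B' * (1 - A * W)) (B' * (A * W * A - A) * C') = 1 := by
  have hB' : B * B' * (A * W * A - A) = A * W * A - A := by
    rw [show A * W * A - A = -((1 - A * W) * A) by noncomm_ring, Matrix.mul_neg,
      ← Matrix.mul_assoc, hB]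
  rw [fromBlocks_multiply, ← fromBlocks_one]
  congr 1
  · rw [← Matrix.mul_assoc, hB]; abel
  · rw [← Matrix.mul_assoc, ← Matrix.mul_assoc, ← Matrix.mul_assoc, hB', ← Matrix.add_mul,
      show A * (1 - W * A) + (A * W * A - A) = 0 by noncomm_ring, Matrix.zero_mul]
  · rw [hCW, Matrix.zero_mul, add_zero]
  · rw [Matrix.zero_mul, add_zero, ← Matrix.mul_assoc, Matrix.mul_sub, Matrix.mul_one,
      ← Matrix.mul_assoc, hCW, Matrix.zero_mul, sub_zero, hC]

namespace IsMoorePenrose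

variable {p q : ℕ} {B : Matrix (Fin p) (Fin q) ℂ} {X : Matrix (Fin q) (Fin p) ℂ}

theorem mul_mul_eq_of_range_le (hX : IsMoorePenrose B X) {r : ℕ}
    {M : Matrix (Fin p) (Fin r) ℂ}
    (hM : LinearMap.range M.mulVecLin ≤ LinearMap.range B.mulVecLin) : B * X * M = M := by
  have hB : (B * X - 1) * B = 0 := by rw [Matrix.sub_mul, Matrix.one_mul, hX.1, sub_self]
  have hM' : (B * X - 1) * M = 0 :=
    Matrix.mul_eq_zero_iff_range_le_ker.mpr (hM.trans (Matrix.mul_eq_zero_iff_range_le_ker.mp hB))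
  rwa [Matrix.sub_mul, Matrix.one_mul, sub_eq_zero] at hM'

theorem mul_eq_one_of_rank_eq (hX : IsMoorePenrose B X) (hB : B.rank = p) : B * X = 1 := by
  have htop : LinearMap.range B.mulVecLin = ⊤ :=
    Submodule.eq_top_of_finrank_eq (by rw [Module.finrank_fin_fun]; exact hB)
  simpa only [Matrix.mul_one] using
    hX.mul_mul_eq_of_range_le (M := (1 : Matrix (Fin p) (Fin p) ℂ)) (htop ▸ le_top)

end IsMoorePenrose

variable {n : ℕ}

def wgMPInverse (A AEP Adag : Matrix (Fin n) (Fin n) ℂ) (m : ℕ) : Matrix (Fin n) (Fin n) ℂ :=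
  AEP ^ (m + 1) * A ^ m * A * Adag

namespace IsCoreEP

variable {k : ℕ} {A X : Matrix (Fin n) (Fin n) ℂ}

theorem mul_mul_pow_eq (hX : IsCoreEP A k X) (hk : (A ^ (k + 1)).rank = (A ^ k).rank) :
    A * X * A ^ k = A ^ k := by
  have h : (A * X - 1) * A ^ (k + 1) = 0 := by
    rw [sub_mul, one_mul, mul_assoc, hX.1, ← pow_succ', sub_self]
  have h' := Matrix.mul_pow_eq_zero_of_mul_pow_succ_eq_zero hk h
  rwa [sub_mul, one_mul, sub_eq_zero] at h'

theorem conjTranspose_pow_mul_mul_eq (hX : IsCoreEP A k X)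
    (hk : (A ^ (k + 1)).rank = (A ^ k).rank) : (A ^ k)ᴴ * (A * X) = (A ^ k)ᴴ := by
  conv_lhs => rw [← hX.2.2]
  rw [← conjTranspose_mul, hX.mul_mul_pow_eq hk]

theorem mul_pow_succ_eq_zero_of_mul_pow_eq_zero (hX : IsCoreEP A k X) {r : ℕ}
    {C : Matrix (Fin r) (Fin n) ℂ} (hC : C * A ^ k = 0) (j : ℕ) : C * X ^ (j + 1) = 0 := by
  rw [pow_succ', ← pow_mul_pow_succ_of_mul_sq hX.2.1 k, ← Matrix.mul_assoc, ← Matrix.mul_assoc,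
    hC, Matrix.zero_mul, Matrix.zero_mul]

theorem mul_wgMPInverse_eq_zero (hX : IsCoreEP A k X) {r : ℕ} {C : Matrix (Fin r) (Fin n) ℂ}
    (hC : C * A ^ k = 0) (Adag : Matrix (Fin n) (Fin n) ℂ) (m : ℕ) :
    C * wgMPInverse A X Adag m = 0 := by
  simp only [wgMPInverse, ← Matrix.mul_assoc, hX.mul_pow_succ_eq_zero_of_mul_pow_eq_zero hC,
    Matrix.zero_mul]

theorem mul_mul_wgMPInverse_eq (hX : IsCoreEP A k X) (hk : (A ^ (k + 1)).rank = (A ^ k).rank)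
    {Adag : Matrix (Fin n) (Fin n) ℂ} (hdag : IsMoorePenrose A Adag) (m : ℕ) :
    (A ^ k)ᴴ * A ^ (m + 1) * Adag * (A * wgMPInverse A X Adag m) =
      (A ^ k)ᴴ * A ^ (m + 1) * Adag := by
  have hA : A ^ (m + 1) * Adag * A = A ^ (m + 1) := by
    rw [pow_succ, mul_assoc, mul_assoc, ← mul_assoc A, hdag.1]
  calc (A ^ k)ᴴ * A ^ (m + 1) * Adag * (A * wgMPInverse A X Adag m)
      = (A ^ k)ᴴ * (A ^ (m + 1) * Adag * A) * X ^ (m + 1) * A ^ m * A * Adag := by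
        simp only [wgMPInverse, mul_assoc]
    _ = (A ^ k)ᴴ * (A ^ (m + 1) * X ^ (m + 1)) * A ^ m * A * Adag := by
        rw [hA]; simp only [mul_assoc]
    _ = (A ^ k)ᴴ * A ^ (m + 1) * Adag := by
        rw [pow_succ_mul_pow_succ_of_mul_sq hX.2.1, hX.conjTranspose_pow_mul_mul_eq hk, pow_succ]
        simp only [mul_assoc]

end IsCoreEP

theorem m_WGMP_inverse_bordered_matrix_general {n k m t : ℕ}
    (A AEP Adag : Matrix (Fin n) (Fin n) ℂ)
    (B : Matrix (Fin n) (Fin (n - t)) ℂ)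
    (C : Matrix (Fin (n - t)) (Fin n) ℂ)
    (Bdag : Matrix (Fin (n - t)) (Fin n) ℂ)
    (Cdag : Matrix (Fin n) (Fin (n - t)) ℂ)
    (hk : HasIndex A k)
    (hEP : IsCoreEP A k AEP)
    (hdag : IsMoorePenrose A Adag)
    (hBdag : IsMoorePenrose B Bdag)
    (hCdag : IsMoorePenrose C Cdag)
    (hCrank : C.rank = n - t)
    (hB : LinearMap.range B.mulVecLin
        = LinearMap.ker ((A ^ k)ᴴ * A ^ (m + 1) * Adag).mulVecLin)
    (hC : LinearMap.ker C.mulVecLin = LinearMap.range (A ^ k).mulVecLin) :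
    IsUnit (Matrix.fromBlocks A B C 0) ∧
    (Matrix.fromBlocks A B C 0)⁻¹
      = Matrix.fromBlocks
          ((AEP ^ (m + 1) * A ^ m) * A * Adag)
          ((1 - ((AEP ^ (m + 1) * A ^ m) * A * Adag) * A) * Cdag)
          (Bdag * (1 - A * ((AEP ^ (m + 1) * A ^ m) * A * Adag)))
          (Bdag * (A * ((AEP ^ (m + 1) * A ^ m) * A * Adag) * A - A) * Cdag) := by
  have hBW : B * Bdag * (1 - A * wgMPInverse A AEP Adag m) =
      1 - A * wgMPInverse A AEP Adag m := by
    refine hBdag.mul_mul_eq_of_range_le ?_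
    rw [hB, ← Matrix.mul_eq_zero_iff_range_le_ker, Matrix.mul_sub, Matrix.mul_one,
      hEP.mul_mul_wgMPInverse_eq hk.1 hdag, sub_self]
  have hCW : C * wgMPInverse A AEP Adag m = 0 :=
    hEP.mul_wgMPInverse_eq_zero (Matrix.mul_eq_zero_iff_range_le_ker.mpr hC.ge) Adag m
  have hKX := Matrix.fromBlocks_mul_fromBlocks_eq_one hBW hCW (hCdag.mul_eq_one_of_rank_eq hCrank)
  exact ⟨IsUnit.of_mul_eq_one _ hKX, Matrix.inv_eq_right_inv hKX⟩

/-- The bordered matrix `K = [[A, B], [C, 0]]` is invertible, with inverse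
expressed via the `m`-WGMP inverse. -/
theorem m_WGMP_inverse_bordered_matrix {n k m t : ℕ}
    (A AEP Adag : Matrix (Fin n) (Fin n) ℂ)
    (B : Matrix (Fin n) (Fin (n - t)) ℂ)
    (C : Matrix (Fin (n - t)) (Fin n) ℂ)
    (Bdag : Matrix (Fin (n - t)) (Fin n) ℂ)
    (Cdag : Matrix (Fin n) (Fin (n - t)) ℂ)
    (hk : HasIndex A k) (hm : 0 < m)
    (ht : (A ^ k).rank = t)
    (hEP : IsCoreEP A k AEP)
    (hdag : IsMoorePenrose A Adag)
    (hBdag : IsMoorePenrose B Bdag)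
    (hCdag : IsMoorePenrose C Cdag)
    (hBrank : B.rank = n - t)
    (hCrank : C.rank = n - t)
    (hB : LinearMap.range B.mulVecLin
        = LinearMap.ker ((A ^ k)ᴴ * A ^ (m + 1) * Adag).mulVecLin)
    (hC : LinearMap.ker C.mulVecLin = LinearMap.range (A ^ k).mulVecLin) :
    IsUnit (Matrix.fromBlocks A B C 0) ∧
    (Matrix.fromBlocks A B C 0)⁻¹
      = Matrix.fromBlocks
          ((AEP ^ (m + 1) * A ^ m) * A * Adag)
          ((1 - ((AEP ^ (m + 1) * A ^ m) * A * Adag) * A) * Cdag)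
          (Bdag * (1 - A * ((AEP ^ (m + 1) * A ^ m) * A * Adag)))
          (Bdag * (A * ((AEP ^ (m + 1) * A ^ m) * A * Adag) * A - A) * Cdag) :=
  m_WGMP_inverse_bordered_matrix_general A AEP Adag B C Bdag Cdag hk hEP hdag hBdag hCdag hCrank hB
    hC
end
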